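/- arXiv:1109.3930 — 13 statements merged into one kernel-verified Lean document; each statement's English description precedes it below -/
import Mathlib

section
/- For a path P_n on n vertices, the Roman domination number equals ⌈2n/3⌉. -/
open SimpleGraph Finset

/-- A Roman dominating function: `f : V → ℕ` taking values in `{0,1,2}` such that
every vertex with value `0` has a neighbor with value `2`. -/
def IsRDF {V : Type*} (G : SimpleGraph V) (f : V → ℕ) : Prop :=
  (∀ v, f v ≤ 2) ∧ ∀ v, f v = 0 → ∃ u, G.Adj v u ∧ f u = 2

/-- The Roman domination number: minimum weight of a Roman dominating function. -/
noncomputable def romanDomNum {V : Type*} (G : SimpleGraph V) [Fintype V] : ℕ :=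
  sInf {w | ∃ f : V → ℕ, IsRDF G f ∧ ∑ v, f v = w}

/-- The Roman bondage number: minimum number of edges whose removal increases
the Roman domination number (`⊤` if no such edge set exists). -/
noncomputable def romanBondage {V : Type*} (G : SimpleGraph V) [Fintype V] : ℕ∞ :=
  sInf {k | ∃ B : Finset (Sym2 V), ↑B ⊆ G.edgeSet ∧ (B.card : ℕ∞) = k ∧
    romanDomNum (G.deleteEdges ↑B) > romanDomNum G}

/-- A dominating set: every vertex is in `S` or adjacent to a member of `S`. -/
def IsDomSet {V : Type*} (G : SimpleGraph V) (S : Set V) : Prop :=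
  ∀ v, v ∈ S ∨ ∃ u ∈ S, G.Adj v u

/-- The domination number: minimum size of a dominating set. -/
noncomputable def domNum {V : Type*} (G : SimpleGraph V) [Fintype V] : ℕ :=
  sInf {k | ∃ S : Finset V, IsDomSet G ↑S ∧ S.card = k}

/-- The bondage number: minimum number of edges whose removal increases
the domination number (`⊤` if no such edge set exists). -/
noncomputable def bondage {V : Type*} (G : SimpleGraph V) [Fintype V] : ℕ∞ :=
  sInf {k | ∃ B : Finset (Sym2 V), ↑B ⊆ G.edgeSet ∧ (B.card : ℕ∞) = k ∧
    domNum (G.deleteEdges ↑B) > domNum G}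

-- helper: card of i<n with i%3=1
lemma card_mod3 (n : ℕ) : ((Finset.range n).filter (fun i => i % 3 = 1)).card = (n+1)/3 := by
  induction n with
  | zero => simp
  | succ k ih =>
    rw [Finset.range_add_one, Finset.filter_insert]
    by_cases h : k % 3 = 1
    · rw [if_pos h, Finset.card_insert_of_notMem (by simp)]
      omega
    · rw [if_neg h, ih]; omega

open scoped Classical in
lemma deg_le (n : ℕ) (v : Fin n) :
    (Finset.univ.filter (fun u : Fin n => (pathGraph n).Adj v u)).card ≤ 2 := by
  have : (Finset.univ.filter (fun u : Fin n => (pathGraph n).Adj v u)) ⊆ (Finset.univ.filter (fun u : Fin n => u.val + 1 = v.val)) ∪ (Finset.univ.filter (fun u : Fin n => v.val + 1 = u.val)) := by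
    intro u hu
    rw [Finset.mem_filter, pathGraph_adj] at hu
    have hu := hu.2
    simp only [Finset.mem_union, Finset.mem_filter, Finset.mem_univ, true_and]
    omega
  calc (Finset.univ.filter (fun u : Fin n => (pathGraph n).Adj v u)).card ≤ _ := Finset.card_le_card this
    _ ≤ _ + _ := Finset.card_union_le _ _
    _ ≤ 2 := by
      have h1 : (Finset.univ.filter (fun u : Fin n => u.val + 1 = v.val)).card ≤ 1 := by
        apply Finset.card_le_one.mpr
        intro a ha b hb
        simp only [Finset.mem_filter] at ha hb
        exact Fin.ext (by omega)
      have h2 : (Finset.univ.filter (fun u : Fin n => v.val + 1 = u.val)).card ≤ 1 := by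
        apply Finset.card_le_one.mpr
        intro a ha b hb
        simp only [Finset.mem_filter] at ha hb
        exact Fin.ext (by omega)
      omega

lemma roman_path_nat (n : ℕ) : romanDomNum (pathGraph n) = (2*n+2)/3 := by
  classical
  set S := {w | ∃ f : Fin n → ℕ, IsRDF (pathGraph n) f ∧ ∑ v, f v = w} with hS
  -- membership
  have hmem : (2*n+2)/3 ∈ S := by
    refine ⟨fun i => if i.val % 3 = 1 then 2 else if i.val + 1 = n ∧ n % 3 = 1 then 1 else 0, ⟨?_, ?_⟩, ?_⟩
    · intro v; dsimp only; split_ifs <;> omega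
    · intro v hv
      dsimp only at hv ⊢
      split_ifs at hv with h1 h2
      rcases (by omega : v.val % 3 = 0 ∨ v.val % 3 = 1 ∨ v.val % 3 = 2) with h0 | h0 | h0
      · -- v%3 = 0, use v+1
        have hlt : v.val + 1 < n := by
          rcases Nat.lt_or_ge (v.val + 1) n with h | h
          · exact h
          · exfalso
            have hvn : v.val + 1 = n := by omega
            exact h2 ⟨hvn, by omega⟩
        refine ⟨⟨v.val + 1, hlt⟩, ?_, ?_⟩
        · rw [pathGraph_adj]; left; rfl
        · rw [if_pos (by simp; omega : (⟨v.val + 1, hlt⟩ : Fin n).val % 3 = 1)]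
      · exact absurd h0 h1
      · -- v%3 = 2, use v-1
        refine ⟨⟨v.val - 1, by omega⟩, ?_, ?_⟩
        · rw [pathGraph_adj]; right; simp; omega
        · rw [if_pos (by simp; omega : (⟨v.val - 1, by omega⟩ : Fin n).val % 3 = 1)]
    · -- sum
      have key : ∀ i : Fin n, (if i.val % 3 = 1 then 2 else if i.val + 1 = n ∧ n % 3 = 1 then 1 else 0)
          = (if i.val % 3 = 1 then 2 else 0) + (if i.val + 1 = n ∧ n % 3 = 1 then 1 else 0) := by
        intro i
        split_ifs with h1 h2 <;> first | rfl | omega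
      rw [Finset.sum_congr rfl (fun i _ => key i), Finset.sum_add_distrib]
      have e1 : ∑ i : Fin n, (if i.val % 3 = 1 then 2 else 0) = 2 * ((n+1)/3) := by
        rw [Fin.sum_univ_eq_sum_range (fun i => if i % 3 = 1 then 2 else 0)]
        rw [← card_mod3 n, Finset.card_filter, Finset.mul_sum]
        apply Finset.sum_congr rfl
        intro i _
        split_ifs <;> simp
      have e2 : ∑ i : Fin n, (if i.val + 1 = n ∧ n % 3 = 1 then 1 else 0) = if n % 3 = 1 then 1 else 0 := by
        rw [Fin.sum_univ_eq_sum_range (fun i => if i + 1 = n ∧ n % 3 = 1 then 1 else 0)]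
        by_cases hn : n % 3 = 1
        · rw [if_pos hn]
          have hn1 : 1 ≤ n := by omega
          have : ∀ i ∈ Finset.range n, (if i + 1 = n ∧ n % 3 = 1 then 1 else 0) = if i = n - 1 then 1 else 0 := by
            intro i hi
            rw [Finset.mem_range] at hi
            split_ifs <;> omega
          rw [Finset.sum_congr rfl this, Finset.sum_ite_eq' (Finset.range n) (n-1) (fun _ => 1)]
          rw [if_pos (Finset.mem_range.mpr (by omega))]
        · rw [if_neg hn]
          apply Finset.sum_eq_zero
          intro i _
          rw [if_neg (by tauto)]
      rw [e1, e2]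
      split_ifs with h <;> omega
  -- lower bound
  have hlb : ∀ w ∈ S, (2*n+2)/3 ≤ w := by
    rintro w ⟨f, ⟨hle, hdom⟩, hsum⟩
    set c0 := (Finset.univ.filter (fun v : Fin n => f v = 0)).card
    set c1 := (Finset.univ.filter (fun v : Fin n => f v = 1)).card
    set c2 := (Finset.univ.filter (fun v : Fin n => f v = 2)).card
    have hpart : c0 + c1 + c2 = n := by
      have h01 : Finset.univ.filter (fun v : Fin n => f v = 0) ∪ (Finset.univ.filter (fun v : Fin n => f v = 1) ∪ Finset.univ.filter (fun v : Fin n => f v = 2)) = Finset.univ := by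
        apply Finset.eq_univ_iff_forall.mpr
        intro v
        simp only [Finset.mem_union, Finset.mem_filter, Finset.mem_univ, true_and]
        have := hle v; omega
      have d01 : Disjoint (Finset.univ.filter (fun v : Fin n => f v = 0)) (Finset.univ.filter (fun v : Fin n => f v = 1) ∪ Finset.univ.filter (fun v : Fin n => f v = 2)) := by
        simp only [Finset.disjoint_left, Finset.mem_union, Finset.mem_filter, Finset.mem_univ, true_and]
        omega
      have d12 : Disjoint (Finset.univ.filter (fun v : Fin n => f v = 1)) (Finset.univ.filter (fun v : Fin n => f v = 2)) := by
        simp only [Finset.disjoint_left, Finset.mem_filter, Finset.mem_univ, true_and]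
        omega
      have htot : (Finset.univ : Finset (Fin n)).card = c0 + (c1 + c2) := by
        rw [← h01, Finset.card_union_of_disjoint d01, Finset.card_union_of_disjoint d12]
      rw [Finset.card_univ, Fintype.card_fin] at htot
      omega
    have hw : w = c1 + 2 * c2 := by
      have key : ∀ v : Fin n, f v = (if f v = 1 then 1 else 0) + 2 * (if f v = 2 then 1 else 0) := by
        intro v; have := hle v; split_ifs <;> omega
      rw [← hsum, Finset.sum_congr rfl (fun v _ => key v), Finset.sum_add_distrib]
      rw [← Finset.mul_sum, ← Finset.card_filter, ← Finset.card_filter]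
    classical
    have hcov : c0 ≤ 2 * c2 := by
      have hsub : Finset.univ.filter (fun v : Fin n => f v = 0) ⊆
          (Finset.univ.filter (fun v : Fin n => f v = 2)).biUnion (fun u => Finset.univ.filter (fun w : Fin n => (pathGraph n).Adj u w)) := by
        intro v hv
        rw [Finset.mem_filter] at hv
        obtain ⟨u, hadj, hu2⟩ := hdom v hv.2
        rw [Finset.mem_biUnion]
        exact ⟨u, Finset.mem_filter.mpr ⟨Finset.mem_univ _, hu2⟩, Finset.mem_filter.mpr ⟨Finset.mem_univ _, hadj.symm⟩⟩
      calc c0 ≤ _ := Finset.card_le_card hsub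
        _ ≤ ∑ u ∈ Finset.univ.filter (fun v : Fin n => f v = 2), (Finset.univ.filter (fun w : Fin n => (pathGraph n).Adj u w)).card := Finset.card_biUnion_le
        _ ≤ ∑ _u ∈ Finset.univ.filter (fun v : Fin n => f v = 2), 2 := Finset.sum_le_sum (fun u _ => deg_le n u)
        _ = 2 * c2 := by rw [Finset.sum_const, smul_eq_mul, mul_comm]
    omega
  exact le_antisymm (Nat.sInf_le hmem) (le_csInf ⟨_, hmem⟩ hlb)

theorem roman_domination_path (n : ℕ) :
    (romanDomNum (pathGraph n) : ℤ) = ⌈(2 * n : ℚ) / 3⌉ := by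
  rw [roman_path_nat]
  have h3 : (0:ℚ) < 3 := by norm_num
  set m := (2*n+2)/3 with hm
  have hm1 : 3 * m ≤ 2*n + 2 := by omega
  have hm2 : 2*n ≤ 3 * m := by omega
  have q1 : (3*m : ℚ) ≤ 2*n+2 := by exact_mod_cast hm1
  have q2 : (2*n : ℚ) ≤ 3*m := by exact_mod_cast hm2
  symm
  rw [Int.ceil_eq_iff]
  constructor
  · rw [lt_div_iff₀ h3]
    push_cast
    linarith
  · rw [div_le_iff₀ h3]
    push_cast
    linarith
end

section
/- For a cycle C_n on n ≥ 3 vertices, the Roman domination number equals ⌈2n/3⌉. -/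
open SimpleGraph Finset

/-! Every vertex of value `0` lies in the neighbourhood of a vertex of value `2`, so a Roman
dominating function with `n₁` ones and `n₂` twos on a graph of maximum degree `Δ` satisfies
`n ≤ n₁ + (Δ + 1) n₂`, whence `(Δ + 1) · (n₁ + 2 n₂) ≥ 2n` once `Δ ≥ 1`. For the cycle
(`Δ = 2`) this gives `γ_R(C_n) ≥ 2n/3`. Conversely, placing `2` on every third vertex of the
path `P_n ≤ C_n`, and `1` on the last vertex when `n ≡ 1 [MOD 3]`, is Roman dominating with
weight `⌈2n/3⌉`. -/

theorem IsRDF.mono {V : Type*} {G H : SimpleGraph V} {f : V → ℕ} (hGH : G ≤ H)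
    (hf : IsRDF G f) : IsRDF H f :=
  ⟨hf.1, fun v hv => (hf.2 v hv).imp fun _ hu => ⟨hGH hu.1, hu.2⟩⟩

theorem romanDomNum_eq_of_isRDF {V : Type*} [Fintype V] {G : SimpleGraph V} {f : V → ℕ}
    (hf : IsRDF G f) (hmin : ∀ g, IsRDF G g → ∑ v, f v ≤ ∑ v, g v) :
    romanDomNum G = ∑ v, f v :=
  le_antisymm (Nat.sInf_le ⟨f, hf, rfl⟩)
    (le_csInf ⟨_, f, hf, rfl⟩ fun _ ⟨g, hg, hw⟩ => hw ▸ hmin g hg)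

theorem IsRDF.two_mul_card_le {V : Type*} [Fintype V] {G : SimpleGraph V} [DecidableRel G.Adj]
    {f : V → ℕ} (hf : IsRDF G f) {Δ : ℕ} (hΔ : 1 ≤ Δ) (hdeg : ∀ v, G.degree v ≤ Δ) :
    2 * Fintype.card V ≤ (Δ + 1) * ∑ v, f v := by
  classical
  set V₁ := univ.filter fun v => f v = 1
  set V₂ := univ.filter fun v => f v = 2
  have hweight : #V₁ + 2 * #V₂ ≤ ∑ v, f v :=
    calc #V₁ + 2 * #V₂ = ∑ v, ((if f v = 1 then 1 else 0) + 2 * if f v = 2 then 1 else 0) := by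
          rw [sum_add_distrib, ← mul_sum, card_filter, card_filter]
      _ ≤ ∑ v, f v := sum_le_sum fun v _ => by have := hf.1 v; split_ifs <;> omega
  have hcover : univ ⊆ V₁ ∪ V₂.biUnion fun u => insert u (G.neighborFinset u) := by
    intro v _
    simp only [mem_union, mem_biUnion, mem_insert, mem_neighborFinset, V₁, V₂, mem_filter,
      mem_univ, true_and]
    obtain h | h | h : f v = 0 ∨ f v = 1 ∨ f v = 2 := by have := hf.1 v; omega
    · obtain ⟨u, huv, hu⟩ := hf.2 v h
      exact Or.inr ⟨u, hu, Or.inr huv.symm⟩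
    · exact Or.inl h
    · exact Or.inr ⟨v, h, Or.inl rfl⟩
  have hcard : Fintype.card V ≤ #V₁ + (Δ + 1) * #V₂ :=
    calc Fintype.card V ≤ #V₁ + ∑ u ∈ V₂, #(insert u (G.neighborFinset u)) :=
          (card_le_card hcover).trans <| (card_union_le _ _).trans <| by
            gcongr; exact card_biUnion_le
      _ ≤ #V₁ + ∑ _u ∈ V₂, (Δ + 1) := by
          gcongr with u
          exact (card_insert_le _ _).trans (Nat.succ_le_succ (hdeg u))
      _ = #V₁ + (Δ + 1) * #V₂ := by rw [sum_const, smul_eq_mul, mul_comm]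
  nlinarith

theorem cycleGraph_degree_le_two {n : ℕ} (v : Fin n) : (cycleGraph n).degree v ≤ 2 := by
  match n with
  | 0 => exact v.elim0
  | 1 => simp [degree]
  | n + 2 => exact cycleGraph_degree_two_le.trans_le card_le_two

def romanPattern (n i : ℕ) : ℕ :=
  if i % 3 = 1 then 2 else if i + 1 = n ∧ n % 3 = 1 then 1 else 0

theorem isRDF_pathGraph_romanPattern (n : ℕ) :
    IsRDF (pathGraph n) fun i => romanPattern n i := by
  refine ⟨fun i => by simp only [romanPattern]; split_ifs <;> omega, fun i hi => ?_⟩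
  obtain ⟨j, hj, hjn, hij⟩ : ∃ j, j % 3 = 1 ∧ j < n ∧ (i.val + 1 = j ∨ j + 1 = i.val) := by
    have hin := i.isLt
    simp only [romanPattern] at hi
    split_ifs at hi with h1 h2
    by_cases h : i.val % 3 = 0
    · exact ⟨i + 1, by omega, by omega, Or.inl rfl⟩
    · exact ⟨i - 1, by omega, by omega, Or.inr (by omega)⟩
  exact ⟨⟨j, hjn⟩, pathGraph_adj.2 hij, by simp [romanPattern, hj]⟩

theorem sum_range_ite_mod_three_eq_one (m : ℕ) :
    ∑ i ∈ range m, (if i % 3 = 1 then 2 else 0) = 2 * ((m + 1) / 3) := by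
  induction m with
  | zero => rfl
  | succ m ih => rw [sum_range_succ, ih]; split_ifs <;> omega

theorem sum_range_romanPattern (n : ℕ) : ∑ i ∈ range n, romanPattern n i = (2 * n + 2) / 3 := by
  rcases n with _ | m
  · rfl
  have hinit : ∀ i ∈ range m, romanPattern (m + 1) i = if i % 3 = 1 then 2 else 0 :=
    fun i hi => by have := mem_range.1 hi; simp only [romanPattern]; split_ifs <;> omega
  rw [sum_range_succ, sum_congr rfl hinit, sum_range_ite_mod_three_eq_one]
  simp only [romanPattern, true_and]
  split_ifs <;> omega

theorem roman_domination_cycle_general (n : ℕ) :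
    (romanDomNum (cycleGraph n) : ℤ) = ⌈(2 * n : ℚ) / 3⌉ := by
  have hpattern : IsRDF (cycleGraph n) fun i => romanPattern n i :=
    (isRDF_pathGraph_romanPattern n).mono pathGraph_le_cycleGraph
  have hweight : ∑ i : Fin n, romanPattern n i = (2 * n + 2) / 3 := by
    rw [Fin.sum_univ_eq_sum_range (romanPattern n), sum_range_romanPattern]
  have hlower : ∀ g, IsRDF (cycleGraph n) g → (2 * n + 2) / 3 ≤ ∑ v, g v := fun g hg => by
    have := hg.two_mul_card_le one_le_two cycleGraph_degree_le_two
    rw [Fintype.card_fin] at this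
    omega
  rw [romanDomNum_eq_of_isRDF hpattern fun g hg => hweight.trans_le (hlower g hg), hweight]
  have hceil := Rat.ceil_natCast_div_natCast (2 * n) 3
  push_cast at hceil
  omega

theorem roman_domination_cycle (n : ℕ) (hn : 3 ≤ n) :
    (romanDomNum (cycleGraph n) : ℤ) = ⌈(2 * n : ℚ) / 3⌉ :=
  roman_domination_cycle_general n
end

section
/- Let G be a nonempty graph (at least one edge) of order n ≥ 3. Then γ_R(G) = 3 if and only if the maximum degree Δ(G) = n − 2. -/
open SimpleGraph Finset

lemma key_lemma {V : Type*} [Fintype V] (G : SimpleGraph V) [DecidableRel G.Adj]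
    (f : V → ℕ) (hf : IsRDF G f) (hsum : ∑ u, f u ≤ 3) :
    (∃ v, f v = 2 ∧ Fintype.card V + 1 ≤ G.degree v + ∑ u, f u) ∨
      Fintype.card V ≤ ∑ u, f u := by
  classical
  by_cases h2 : ∃ v, f v = 2
  · obtain ⟨v, hv⟩ := h2
    left
    refine ⟨v, hv, ?_⟩
    have huniq : ∀ w, f w = 2 → w = v := by
      intro w hw
      by_contra hwv
      have hsub : ({w, v} : Finset V) ⊆ Finset.univ := Finset.subset_univ _
      have h4 : f w + f v ≤ ∑ u, f u := by
        have := Finset.sum_le_sum_of_subset (f := f) hsub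
        rwa [Finset.sum_pair hwv] at this
      omega
    set Z := Finset.univ.filter (fun u => f u = 0) with hZ
    set N := Finset.univ.filter (fun u => ¬ f u = 0) with hN
    have hcard : Z.card + N.card = Fintype.card V := by
      rw [hZ, hN]
      simpa using Finset.card_filter_add_card_filter_not
        (s := Finset.univ) (p := fun u => f u = 0)
    have hZsub : Z ⊆ G.neighborFinset v := by
      intro w hw
      rw [hZ, Finset.mem_filter] at hw
      obtain ⟨u, hadj, hu2⟩ := hf.2 w hw.2
      rw [huniq u hu2] at hadj
      rw [SimpleGraph.mem_neighborFinset]; exact hadj.symm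
    have hdeg : Z.card ≤ G.degree v := by
      rw [← SimpleGraph.card_neighborFinset_eq_degree]
      exact Finset.card_le_card hZsub
    have hvN : v ∈ N := by
      rw [hN, Finset.mem_filter]; exact ⟨Finset.mem_univ _, by omega⟩
    have hsumN : ∑ u ∈ N, f u = ∑ u, f u := by
      apply Finset.sum_subset (Finset.subset_univ _)
      intro x _ hx
      rw [hN, Finset.mem_filter] at hx
      by_contra h
      exact hx ⟨Finset.mem_univ _, h⟩
    have hsplit : ∑ u ∈ N, f u = f v + ∑ u ∈ N.erase v, f u :=
      (Finset.add_sum_erase _ f hvN).symm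
    have herase : (N.erase v).card ≤ ∑ u ∈ N.erase v, f u := by
      have : ∀ x ∈ N.erase v, 1 ≤ f x := by
        intro x hx
        have := (Finset.mem_erase.mp hx).2
        rw [hN, Finset.mem_filter] at this
        omega
      calc (N.erase v).card = (N.erase v).card • 1 := by simp
        _ ≤ ∑ u ∈ N.erase v, f u := Finset.card_nsmul_le_sum _ _ _ this
    have hce : (N.erase v).card = N.card - 1 := Finset.card_erase_of_mem hvN
    have hN1 : 1 ≤ N.card := Finset.card_pos.mpr ⟨v, hvN⟩
    omega
  · right
    push_neg at h2
    have : ∀ x ∈ Finset.univ, 1 ≤ f x := by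
      intro x _
      rcases Nat.eq_zero_or_pos (f x) with h0 | h1
      · obtain ⟨u, _, hu2⟩ := hf.2 x h0
        exact absurd hu2 (h2 u)
      · exact h1
    calc Fintype.card V = (Finset.univ : Finset V).card • 1 := by simp
      _ ≤ ∑ u, f u := Finset.card_nsmul_le_sum _ _ _ this
lemma rdf_two {V : Type*} [Fintype V] (G : SimpleGraph V) [DecidableRel G.Adj]
    (v : V) (hd : G.degree v + 1 = Fintype.card V) :
    ∃ f : V → ℕ, IsRDF G f ∧ ∑ u, f u = 2 := by
  classical
  refine ⟨fun w => if w = v then 2 else 0, ⟨⟨fun w => by dsimp only; split <;> omega, ?_⟩, ?_⟩⟩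
  · intro w hw
    refine ⟨v, ?_, if_pos rfl⟩
    have hwv : w ≠ v := by intro h; simp [h] at hw
    have hnb : G.neighborFinset v = Finset.univ.erase v := by
      apply Finset.eq_of_subset_of_card_le
      · intro x hx
        rw [SimpleGraph.mem_neighborFinset] at hx
        exact Finset.mem_erase.mpr ⟨hx.ne', Finset.mem_univ _⟩
      · rw [Finset.card_erase_of_mem (Finset.mem_univ _), Finset.card_univ,
          SimpleGraph.card_neighborFinset_eq_degree]
        omega
    have : w ∈ G.neighborFinset v := by
      rw [hnb]; exact Finset.mem_erase.mpr ⟨hwv, Finset.mem_univ _⟩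
    rw [SimpleGraph.mem_neighborFinset] at this
    exact this.symm
  · rw [Finset.sum_ite_eq' Finset.univ v (fun _ => 2)]
    simp

lemma rdf_three {V : Type*} [Fintype V] (G : SimpleGraph V) [DecidableRel G.Adj]
    (v : V) (hd : G.degree v + 2 = Fintype.card V) :
    ∃ f : V → ℕ, IsRDF G f ∧ ∑ u, f u = 3 := by
  classical
  have hsub : insert v (G.neighborFinset v) ⊂ Finset.univ := by
    apply Finset.ssubset_univ_iff.mpr
    intro h
    have : (insert v (G.neighborFinset v)).card = Fintype.card V := by
      rw [h, Finset.card_univ]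
    rw [Finset.card_insert_of_notMem (G.notMem_neighborFinset_self v),
      SimpleGraph.card_neighborFinset_eq_degree] at this
    omega
  obtain ⟨u, _, hu⟩ := Finset.exists_of_ssubset hsub
  have huv : u ≠ v := fun h => hu (h ▸ Finset.mem_insert_self _ _)
  have hunb : u ∉ G.neighborFinset v := fun h => hu (Finset.mem_insert_of_mem h)
  have hfull : insert u (insert v (G.neighborFinset v)) = Finset.univ := by
    apply Finset.eq_univ_of_card
    rw [Finset.card_insert_of_notMem (by simp [huv, hunb]),
      Finset.card_insert_of_notMem (G.notMem_neighborFinset_self v),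
      SimpleGraph.card_neighborFinset_eq_degree]
    omega
  refine ⟨fun w => if w = v then 2 else if w = u then 1 else 0,
    ⟨⟨fun w => by dsimp only; split <;> [omega; (split <;> omega)], ?_⟩, ?_⟩⟩
  · intro w hw
    have hwv : w ≠ v := by intro h; simp [h] at hw
    have hwu : w ≠ u := by intro h; simp [h, huv] at hw
    refine ⟨v, ?_, if_pos rfl⟩
    have : w ∈ insert u (insert v (G.neighborFinset v)) := hfull ▸ Finset.mem_univ w
    simp only [Finset.mem_insert, SimpleGraph.mem_neighborFinset] at this
    rcases this with h | h | h
    · exact absurd h hwu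
    · exact absurd h hwv
    · exact h.symm
  · have hsupp : ∀ x ∈ Finset.univ, x ∉ ({v, u} : Finset V) →
        (if x = v then 2 else if x = u then 1 else 0) = 0 := by
      intro x _ hx
      simp only [Finset.mem_insert, Finset.mem_singleton] at hx
      push_neg at hx
      simp [hx.1, hx.2]
    rw [← Finset.sum_subset (Finset.subset_univ {v, u}) hsupp,
      Finset.sum_pair (Ne.symm huv)]
    simp [huv]

theorem roman_domination_eq_three_iff {V : Type*} [Fintype V]
    (G : SimpleGraph V) [DecidableRel G.Adj]
    (hn : 3 ≤ Fintype.card V) (hne : G ≠ ⊥) :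
    romanDomNum G = 3 ↔ G.maxDegree = Fintype.card V - 2 := by
  classical
  have hnonempty : Nonempty V := Fintype.card_pos_iff.mp (by omega)
  have hΔlt : G.maxDegree < Fintype.card V := G.maxDegree_lt_card_verts
  obtain ⟨vm, hvm⟩ := G.exists_maximal_degree_vertex
  have hΔ1 : 1 ≤ G.maxDegree := by
    obtain ⟨e, he⟩ := (SimpleGraph.edgeSet_nonempty).mpr hne
    induction e with
    | h a b =>
      have hab : G.Adj a b := he
      have : 1 ≤ G.degree a := by
        rw [← SimpleGraph.card_neighborFinset_eq_degree]
        exact Finset.card_pos.mpr ⟨b, (SimpleGraph.mem_neighborFinset G a b).mpr hab⟩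
      exact le_trans this (G.degree_le_maxDegree a)
  constructor
  · intro h3
    have hmem : 3 ∈ {w | ∃ f : V → ℕ, IsRDF G f ∧ ∑ v, f v = w} := by
      rw [← h3]
      apply Nat.sInf_mem
      by_contra hemp
      rw [Set.not_nonempty_iff_eq_empty] at hemp
      rw [romanDomNum, hemp, Nat.sInf_empty] at h3
      omega
    obtain ⟨f, hf, hsum⟩ := hmem
    -- upper bound on maxDegree: ≠ n - 1
    have hub : G.maxDegree + 2 ≤ Fintype.card V := by
      by_contra hc
      have hdm : G.degree vm + 1 = Fintype.card V := by omega
      obtain ⟨g, hg, hgsum⟩ := rdf_two G vm hdm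
      have h2mem : romanDomNum G ≤ 2 := Nat.sInf_le ⟨g, hg, hgsum⟩
      omega
    have hlb : Fintype.card V ≤ G.maxDegree + 2 := by
      rcases key_lemma G f hf (by omega) with ⟨v, _, hv⟩ | hbig
      · have := G.degree_le_maxDegree v
        omega
      · -- card V ≤ 3, so card V = 3
        omega
    omega
  · intro hΔ
    have hdm : G.degree vm + 2 = Fintype.card V := by omega
    obtain ⟨g, hg, hgsum⟩ := rdf_three G vm hdm
    have h3mem : (3 : ℕ) ∈ {w | ∃ f : V → ℕ, IsRDF G f ∧ ∑ v, f v = w} := ⟨g, hg, hgsum⟩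
    apply le_antisymm (Nat.sInf_le h3mem)
    apply le_csInf ⟨3, h3mem⟩
    rintro w ⟨f, hf, hsum⟩
    by_contra hw
    push_neg at hw
    rcases key_lemma G f hf (by omega) with ⟨v, _, hv⟩ | hbig
    · have := G.degree_le_maxDegree v
      omega
    · omega
end

section
/- If G is an (n−3)-regular graph of order n ≥ 4, then γ_R(G) = 4. -/
open SimpleGraph Finset

lemma nonnbr_card {V : Type*} [Fintype V] [DecidableEq V]
    (G : SimpleGraph V) [DecidableRel G.Adj]
    (hn : 4 ≤ Fintype.card V)
    (hreg : G.IsRegularOfDegree (Fintype.card V - 3)) (u : V) :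
    (Finset.univ.filter (fun v => v ≠ u ∧ ¬ G.Adj u v)).card = 2 := by
  have hdeg : (G.neighborFinset u).card = Fintype.card V - 3 := hreg u
  have hE : Finset.univ.filter (fun v => v ≠ u ∧ ¬ G.Adj u v)
      = Finset.univ \ insert u (G.neighborFinset u) := by
    ext v
    simp [SimpleGraph.mem_neighborFinset, and_comm, not_or]
  have hins : (insert u (G.neighborFinset u)).card = Fintype.card V - 3 + 1 := by
    rw [Finset.card_insert_of_notMem (by simp), hdeg]
  rw [hE, Finset.card_sdiff_of_subset (Finset.subset_univ _), Finset.card_univ, hins]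
  omega

theorem roman_domination_of_regular {V : Type*} [Fintype V]
    (G : SimpleGraph V) [DecidableRel G.Adj]
    (hn : 4 ≤ Fintype.card V)
    (hreg : G.IsRegularOfDegree (Fintype.card V - 3)) :
    romanDomNum G = 4 := by
  classical
  obtain ⟨u⟩ : Nonempty V := Fintype.card_pos_iff.mp (by omega)
  set S := Finset.univ.filter (fun v => v ≠ u ∧ ¬ G.Adj u v) with hSdef
  have hScard : S.card = 2 := nonnbr_card G hn hreg u
  set f : V → ℕ := fun v => if v = u then 2 else if v ∈ S then 1 else 0 with hfdef
  have hfu : f u = 2 := by simp [hfdef]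
  have hSsub : S ⊆ Finset.univ.erase u := by
    intro v hv
    simp only [hSdef, Finset.mem_filter] at hv
    exact Finset.mem_erase.mpr ⟨hv.2.1, Finset.mem_univ v⟩
  have hsum : ∑ v, f v = 4 := by
    rw [← Finset.add_sum_erase _ f (Finset.mem_univ u), hfu]
    have h1 : ∑ v ∈ Finset.univ.erase u, f v
        = ∑ v ∈ Finset.univ.erase u, (if v ∈ S then 1 else 0) := by
      apply Finset.sum_congr rfl
      intro v hv
      have : v ≠ u := (Finset.mem_erase.mp hv).1
      simp [hfdef, this]
    rw [h1, Finset.sum_ite_mem, Finset.inter_eq_right.mpr hSsub, Finset.sum_const, hScard]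
    simp
  have hRDF : IsRDF G f := by
    constructor
    · intro v
      by_cases h : v = u <;> simp [hfdef, h] <;> split <;> omega
    · intro v hv
      refine ⟨u, ?_, hfu⟩
      by_contra hadj
      have hvu : v ≠ u := by
        intro h; rw [h, hfu] at hv; omega
      have hvS : v ∈ S := by
        simp only [hSdef, Finset.mem_filter]
        exact ⟨Finset.mem_univ v, hvu, fun h => hadj h.symm⟩
      simp [hfdef, hvu, hvS] at hv
  have hmem : 4 ∈ {w | ∃ f : V → ℕ, IsRDF G f ∧ ∑ v, f v = w} := ⟨f, hRDF, hsum⟩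
  refine le_antisymm (Nat.sInf_le hmem) (le_csInf ⟨4, hmem⟩ ?_)
  rintro w ⟨g, ⟨hg2, hg0⟩, rfl⟩
  by_cases hz : ∃ v, g v = 0
  · obtain ⟨v, hv⟩ := hz
    obtain ⟨x, hadj, hx2⟩ := hg0 v hv
    set T := Finset.univ.filter (fun a => a ≠ x ∧ ¬ G.Adj x a) with hTdef
    have hTcard : T.card = 2 := nonnbr_card G hn hreg x
    have hxT : x ∉ T := by simp [hTdef]
    by_cases ha : ∃ a ∈ T, g a = 0
    · obtain ⟨a, haT, ha0⟩ := ha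
      obtain ⟨y, hay, hy2⟩ := hg0 a ha0
      have hyx : y ≠ x := by
        intro h
        rw [h] at hay
        simp only [hTdef, Finset.mem_filter] at haT
        exact haT.2.2 hay.symm
      have : ({x, y} : Finset V).sum g ≤ ∑ v, g v :=
        Finset.sum_le_sum_of_subset (Finset.subset_univ _)
      rw [Finset.sum_pair (Ne.symm hyx), hx2, hy2] at this
      omega
    · push_neg at ha
      have hsub : insert x T ⊆ Finset.univ := Finset.subset_univ _
      have hle : (insert x T).sum g ≤ ∑ v, g v :=
        Finset.sum_le_sum_of_subset hsub
      rw [Finset.sum_insert hxT, hx2] at hle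
      have hT1 : 2 ≤ ∑ a ∈ T, g a := by
        calc 2 = ∑ _a ∈ T, 1 := by simp [hTcard]
        _ ≤ ∑ a ∈ T, g a :=
          Finset.sum_le_sum (fun a haT => Nat.one_le_iff_ne_zero.mpr (ha a haT))
      omega
  · push_neg at hz
    have : Fintype.card V ≤ ∑ v, g v := by
      calc Fintype.card V = ∑ _v : V, 1 := by simp
      _ ≤ ∑ v, g v := Finset.sum_le_sum (fun v _ => Nat.one_le_iff_ne_zero.mpr (hz v))
    omega
end

section
/- For a graph G of order n, γ(G) = γ_R(G) if and only if G has no edges (G is the empty graph on n vertices). -/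
open SimpleGraph Finset

theorem domination_eq_roman_iff_bot {V : Type*} [Fintype V] (G : SimpleGraph V) :
    domNum G = romanDomNum G ↔ G = ⊥ := by
  classical
  constructor
  · intro h
    by_contra hne
    obtain ⟨u, v, huv⟩ : ∃ u v, G.Adj u v := by
      by_contra hc
      push_neg at hc
      exact hne (by ext a b; simp [hc a b])
    have hR : romanDomNum G ∈ {w | ∃ f : V → ℕ, IsRDF G f ∧ ∑ v, f v = w} := by
      apply Nat.sInf_mem
      exact ⟨∑ _v : V, (1:ℕ), fun _ => 1,
        ⟨fun _ => by norm_num, fun v hv => by simp at hv⟩, rfl⟩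
    obtain ⟨f, hf, hsum⟩ := hR
    set S : Finset V := Finset.univ.filter (fun v => f v ≠ 0) with hS
    have hSdom : IsDomSet G ↑S := by
      intro w
      by_cases hw : f w = 0
      · obtain ⟨x, hx, hx2⟩ := hf.2 w hw
        exact Or.inr ⟨x, by simp [hS, hx2], hx⟩
      · exact Or.inl (by simp [hS, hw])
    have hmem1 : ∀ i ∈ S, (1:ℕ) ≤ f i := by
      intro i hi
      simp only [hS, Finset.mem_filter] at hi
      omega
    have hcard_le : S.card ≤ ∑ v, f v := by
      calc S.card = ∑ _v ∈ S, 1 := by simp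
        _ ≤ ∑ v ∈ S, f v := Finset.sum_le_sum hmem1
        _ ≤ ∑ v, f v := Finset.sum_le_sum_of_subset (Finset.filter_subset _ _)
    have hdom_le : domNum G ≤ S.card := Nat.sInf_le ⟨S, hSdom, rfl⟩
    have hf1 : ∀ w, f w ≤ 1 := by
      intro w
      by_contra hw
      push_neg at hw
      have hwS : w ∈ S := by simp [hS]; omega
      have hlt : ∑ _v ∈ S, (1:ℕ) < ∑ v ∈ S, f v :=
        Finset.sum_lt_sum hmem1 ⟨w, hwS, hw⟩
      have : S.card < ∑ v, f v := by
        calc S.card = ∑ _v ∈ S, 1 := by simp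
          _ < ∑ v ∈ S, f v := hlt
          _ ≤ ∑ v, f v := Finset.sum_le_sum_of_subset (Finset.filter_subset _ _)
      omega
    have hfeq : ∀ w, f w = 1 := by
      intro w
      rcases Nat.lt_or_ge (f w) 1 with hw | hw
      · exfalso
        obtain ⟨x, _, hx2⟩ := hf.2 w (by omega)
        have := hf1 x; omega
      · have := hf1 w; omega
    have hsum_n : ∑ w, f w = Fintype.card V := by
      simp [hfeq]
    -- dominating set of size n-1
    have hvne : v ≠ u := (G.ne_of_adj huv).symm
    have hdom' : IsDomSet G ↑(Finset.univ.erase u) := by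
      intro w
      by_cases hw : w = u
      · exact Or.inr ⟨v, by simp [hvne], hw ▸ huv⟩
      · exact Or.inl (by simp [hw])
    have h1 : domNum G ≤ (Finset.univ.erase u).card :=
      Nat.sInf_le ⟨_, hdom', rfl⟩
    have h2 : (Finset.univ.erase u).card = Fintype.card V - 1 := by
      simp [Finset.card_erase_of_mem]
    have h3 : 1 ≤ Fintype.card V := Fintype.card_pos_iff.mpr ⟨u⟩
    omega
  · intro h
    subst h
    have hdom : domNum (⊥ : SimpleGraph V) = Fintype.card V := by
      have hmem : domNum (⊥ : SimpleGraph V) ∈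
          {k | ∃ S : Finset V, IsDomSet (⊥ : SimpleGraph V) ↑S ∧ S.card = k} := by
        apply Nat.sInf_mem
        exact ⟨Fintype.card V, Finset.univ, fun w => Or.inl (by simp), by simp⟩
      obtain ⟨S, hSd, hSc⟩ := hmem
      have : S = Finset.univ := by
        ext w
        rcases hSd w with hw | ⟨x, _, hx⟩
        · simpa using hw
        · simp at hx
      rw [this] at hSc
      simpa using hSc.symm
    have hrom : romanDomNum (⊥ : SimpleGraph V) = Fintype.card V := by
      have hle : romanDomNum (⊥ : SimpleGraph V) ≤ Fintype.card V := by
        apply Nat.sInf_le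
        exact ⟨fun _ => 1, ⟨fun _ => by norm_num, fun v hv => by simp at hv⟩, by simp⟩
      have hmem : romanDomNum (⊥ : SimpleGraph V) ∈
          {w | ∃ f : V → ℕ, IsRDF (⊥ : SimpleGraph V) f ∧ ∑ v, f v = w} := by
        apply Nat.sInf_mem
        exact ⟨Fintype.card V, fun _ => 1,
          ⟨fun _ => by norm_num, fun v hv => by simp at hv⟩, by simp⟩
      obtain ⟨f, hfR, hfs⟩ := hmem
      have hge : Fintype.card V ≤ ∑ v, f v := by
        calc Fintype.card V = ∑ _v : V, 1 := by simp
          _ ≤ ∑ v, f v := Finset.sum_le_sum (fun i _ => by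
              rcases Nat.eq_zero_or_pos (f i) with h0 | h0
              · obtain ⟨x, hx, _⟩ := hfR.2 i h0
                simp at hx
              · omega)
      omega
    rw [hdom, hrom]
end

section
/- If G is a graph of order n ≥ 3 having exactly t ≥ 1 vertices of degree n−1, then the Roman bondage number b_R(G) = ⌈t/2⌉. -/
open SimpleGraph Finset

section Helpers

variable {V : Type*} [Fintype V]

lemma universal_iff (G : SimpleGraph V) [DecidableRel G.Adj] (v : V) :
    G.degree v = Fintype.card V - 1 ↔ ∀ w, w ≠ v → G.Adj v w := by
  classical
  have hdeg : G.degree v = (G.neighborFinset v).card := rfl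
  have hsub : G.neighborFinset v ⊆ Finset.univ.erase v := by
    intro w hw
    rw [SimpleGraph.mem_neighborFinset] at hw
    exact Finset.mem_erase.2 ⟨(G.ne_of_adj hw).symm, Finset.mem_univ _⟩
  have hcard : (Finset.univ.erase v).card = Fintype.card V - 1 := by
    rw [Finset.card_erase_of_mem (Finset.mem_univ v), Finset.card_univ]
  constructor
  · intro h w hw
    have heq : G.neighborFinset v = Finset.univ.erase v :=
      Finset.eq_of_subset_of_card_le hsub (by omega)
    have : w ∈ G.neighborFinset v := heq ▸ Finset.mem_erase.2 ⟨hw, Finset.mem_univ _⟩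
    exact (SimpleGraph.mem_neighborFinset G v w).1 this
  · intro h
    have heq : G.neighborFinset v = Finset.univ.erase v := by
      refine Finset.Subset.antisymm hsub (fun w hw => ?_)
      rw [SimpleGraph.mem_neighborFinset]
      exact h w (Finset.mem_erase.1 hw).1
    rw [hdeg, heq, hcard]

lemma rdnum_nonempty (G : SimpleGraph V) :
    {w | ∃ f : V → ℕ, IsRDF G f ∧ ∑ v, f v = w}.Nonempty :=
  ⟨Fintype.card V, fun _ => 1, ⟨fun _ => one_le_two, fun v h => absurd h one_ne_zero⟩,
    by simp⟩

lemma rdf_two_le (G : SimpleGraph V) (h2 : 2 ≤ Fintype.card V) (f : V → ℕ)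
    (hf : IsRDF G f) : 2 ≤ ∑ v, f v := by
  by_cases h0 : ∃ v, f v = 0
  · obtain ⟨v, hv⟩ := h0
    obtain ⟨u, -, hu2⟩ := hf.2 v hv
    have := Finset.single_le_sum (f := f) (fun i _ => Nat.zero_le _) (Finset.mem_univ u)
    omega
  · push_neg at h0
    have h4 : Fintype.card V ≤ ∑ v, f v := by
      simpa using Finset.card_nsmul_le_sum Finset.univ f 1
        (fun x _ => Nat.one_le_iff_ne_zero.2 (h0 x))
    omega

lemma rdnum_eq_two (G : SimpleGraph V) (h2 : 2 ≤ Fintype.card V) (v : V)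
    (hv : ∀ w, w ≠ v → G.Adj v w) : romanDomNum G = 2 := by
  classical
  refine le_antisymm ?_ ?_
  · apply Nat.sInf_le
    refine ⟨fun w => if w = v then 2 else 0, ⟨fun w => by by_cases h : w = v <;> simp [h], ?_⟩, by simp⟩
    intro w hw
    have hwv : w ≠ v := by intro h; subst h; simp at hw
    exact ⟨v, (hv w hwv).symm, by simp⟩
  · refine le_csInf (rdnum_nonempty G) ?_
    rintro w ⟨f, hf, rfl⟩
    exact rdf_two_le G h2 f hf

lemma rdnum_three_le (G : SimpleGraph V) (h3 : 3 ≤ Fintype.card V)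
    (h : ∀ v : V, ∃ w, w ≠ v ∧ ¬ G.Adj v w) : 3 ≤ romanDomNum G := by
  classical
  refine le_csInf (rdnum_nonempty G) ?_
  rintro w ⟨f, hf, rfl⟩
  by_contra hlt
  push_neg at hlt
  have hsum : ∑ v, f v ≤ 2 := by omega
  by_cases h2 : ∃ u, f u = 2
  · obtain ⟨u, hu⟩ := h2
    have hzero : ∀ w, w ≠ u → f w = 0 := by
      intro w hw
      have : f u + f w ≤ ∑ v, f v := by
        rw [← Finset.sum_pair hw.symm]
        exact Finset.sum_le_sum_of_subset (Finset.subset_univ _)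
      omega
    obtain ⟨w, hwu, hnadj⟩ := h u
    have hfw := hzero w hwu
    obtain ⟨x, hadj, hx2⟩ := hf.2 w hfw
    have hxu : x = u := by
      by_contra hxu
      rw [hzero x hxu] at hx2
      omega
    exact hnadj (hxu ▸ hadj).symm
  · push_neg at h2
    have hone : ∀ v, 1 ≤ f v := by
      intro v
      by_contra hv
      push_neg at hv
      obtain ⟨x, -, hx2⟩ := hf.2 v (by omega)
      exact h2 x hx2
    have h4 : Fintype.card V ≤ ∑ v, f v := by
      simpa using Finset.card_nsmul_le_sum Finset.univ f 1 (fun x _ => hone x)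
    omega

end Helpers

theorem roman_bondage_of_universal_vertices {V : Type*} [Fintype V]
    (G : SimpleGraph V) [DecidableRel G.Adj] (t : ℕ)
    (ht : t = (Finset.univ.filter fun v => G.degree v = Fintype.card V - 1).card)
    (hn : 3 ≤ Fintype.card V) (ht1 : 1 ≤ t) :
    romanBondage G = ((t + 1) / 2 : ℕ) := by
  classical
  set U : Finset V := Finset.univ.filter (fun v => G.degree v = Fintype.card V - 1) with hUdef
  have hUcard : U.card = t := ht.symm
  have hUuniv : ∀ v ∈ U, ∀ w, w ≠ v → G.Adj v w := by
    intro v hv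
    rw [hUdef, Finset.mem_filter] at hv
    exact (universal_iff G v).1 hv.2
  have hUnot : ∀ v, v ∉ U → ∃ w, w ≠ v ∧ ¬ G.Adj v w := by
    intro v hv
    rw [hUdef, Finset.mem_filter] at hv
    have : ¬ ∀ w, w ≠ v → G.Adj v w := fun h => hv ⟨Finset.mem_univ _, (universal_iff G v).2 h⟩
    push_neg at this
    exact this
  obtain ⟨v₀, hv₀⟩ : U.Nonempty := Finset.card_pos.1 (by rw [hUcard]; omega)
  have hG2 : romanDomNum G = 2 := rdnum_eq_two G (show 2 ≤ Fintype.card V by omega) v₀ (hUuniv v₀ hv₀)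
  obtain ⟨p, hp⟩ : ∃ p : V → V, ∀ v, p v ≠ v := by
    have := fun v : V => Fintype.exists_ne_of_one_lt_card (α := V) (show 1 < Fintype.card V by omega) v
    exact ⟨fun v => (this v).choose, fun v => (this v).choose_spec⟩
  -- the list of universal vertices
  set l : List V := U.toList with hldef
  have hlen : l.length = t := by rw [hldef, Finset.length_toList, hUcard]
  have hnd : l.Nodup := Finset.nodup_toList U
  have hlmem : ∀ {i : ℕ} (h : i < t), l.getD i v₀ ∈ U := by
    intro i h
    rw [List.getD_eq_getElem l v₀ (by omega)]
    exact Finset.mem_toList.1 (List.getElem_mem _)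
  -- the edge chooser
  set g : ℕ → Sym2 V := fun i =>
    if 2*i+1 < t then s(l.getD (2*i) v₀, l.getD (2*i+1) v₀)
    else s(l.getD (2*i) v₀, p (l.getD (2*i) v₀)) with hgdef
  set B : Finset (Sym2 V) := (Finset.range ((t+1)/2)).image g with hBdef
  have hBcard : B.card ≤ (t+1)/2 := le_trans (Finset.card_image_le) (by simp)
  have hBsub : ↑B ⊆ G.edgeSet := by
    intro e he
    rw [Finset.mem_coe, hBdef, Finset.mem_image] at he
    obtain ⟨i, hi, rfl⟩ := he
    rw [Finset.mem_range] at hi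
    have h2i : 2*i < t := by omega
    have ha : l.getD (2*i) v₀ ∈ U := hlmem h2i
    rw [hgdef]
    dsimp only
    split
    · rename_i hlt
      rw [SimpleGraph.mem_edgeSet]
      apply hUuniv _ ha
      rw [List.getD_eq_getElem l v₀ (by omega), List.getD_eq_getElem l v₀ (by omega)]
      rw [Ne, hnd.getElem_inj_iff]
      omega
    · rw [SimpleGraph.mem_edgeSet]
      exact hUuniv _ ha _ (hp _)
  have hnouniv : ∀ v : V, ∃ w, w ≠ v ∧ ¬ (G.deleteEdges ↑B).Adj v w := by
    intro v
    by_cases hvU : v ∈ U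
    · obtain ⟨j, hj, hjv⟩ := List.mem_iff_getElem.1 (Finset.mem_toList.2 hvU)
      rw [hlen] at hj
      have hgetj : l.getD j v₀ = v := by rw [List.getD_eq_getElem l v₀ (by omega)]; exact hjv
      by_cases hpar : j % 2 = 0
      · set i := j / 2 with hidef
        have hji : j = 2*i := by omega
        have hi : i < (t+1)/2 := by omega
        by_cases hlt : 2*i+1 < t
        · refine ⟨l.getD (2*i+1) v₀, ?_, ?_⟩
          · rw [← hgetj, hji, List.getD_eq_getElem l v₀ (by omega),
              List.getD_eq_getElem l v₀ (by omega), Ne, hnd.getElem_inj_iff]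
            omega
          · rw [SimpleGraph.deleteEdges_adj]
            rintro ⟨-, hne⟩
            apply hne
            rw [Finset.mem_coe, hBdef, Finset.mem_image]
            refine ⟨i, Finset.mem_range.2 hi, ?_⟩
            rw [hgdef]
            dsimp only
            have hv2i : l.getD (2*i) v₀ = v := by rw [← hji]; exact hgetj
            rw [if_pos hlt, hv2i]
        · refine ⟨p v, hp v, ?_⟩
          rw [SimpleGraph.deleteEdges_adj]
          rintro ⟨-, hne⟩
          apply hne
          rw [Finset.mem_coe, hBdef, Finset.mem_image]
          refine ⟨i, Finset.mem_range.2 hi, ?_⟩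
          rw [hgdef]
          dsimp only
          have hv2i : l.getD (2*i) v₀ = v := by rw [← hji]; exact hgetj
          rw [if_neg hlt, hv2i]
      · set i := j / 2 with hidef
        have hji : j = 2*i+1 := by omega
        have hi : i < (t+1)/2 := by omega
        have hlt : 2*i+1 < t := by omega
        refine ⟨l.getD (2*i) v₀, ?_, ?_⟩
        · rw [← hgetj, hji, List.getD_eq_getElem l v₀ (by omega),
            List.getD_eq_getElem l v₀ (by omega), Ne, hnd.getElem_inj_iff]
          omega
        · rw [SimpleGraph.deleteEdges_adj]
          rintro ⟨-, hne⟩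
          apply hne
          rw [Finset.mem_coe, hBdef, Finset.mem_image]
          refine ⟨i, Finset.mem_range.2 hi, ?_⟩
          rw [hgdef]
          dsimp only
          have hv2i : l.getD (2*i+1) v₀ = v := by rw [← hji]; exact hgetj
          rw [if_pos hlt, hv2i, Sym2.eq_swap]
    · obtain ⟨w, hwv, hnadj⟩ := hUnot v hvU
      refine ⟨w, hwv, fun hadj => hnadj hadj.1⟩
  have hgt : romanDomNum (G.deleteEdges ↑B) > romanDomNum G := by
    rw [hG2]
    have := rdnum_three_le (G.deleteEdges ↑B) hn hnouniv
    omega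
  refine le_antisymm ?_ ?_
  · calc romanBondage G ≤ (B.card : ℕ∞) := sInf_le ⟨B, hBsub, rfl, hgt⟩
    _ ≤ ((t+1)/2 : ℕ) := by exact_mod_cast hBcard
  · rw [romanBondage]
    refine le_sInf ?_
    rintro k ⟨B', hB'sub, rfl, hB'gt⟩
    rw [Nat.cast_le]
    have key : ∀ v ∈ U, ∃ s, s ∈ B' ∧ v ∈ s := by
      intro v hv
      have hex : ∃ w, w ≠ v ∧ ¬ (G.deleteEdges ↑B').Adj v w := by
        by_contra hc
        push_neg at hc
        have h2' : romanDomNum (G.deleteEdges ↑B') = 2 :=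
          rdnum_eq_two _ (show 2 ≤ Fintype.card V by omega) v hc
        omega
      obtain ⟨w, hwv, hnadj⟩ := hex
      have hadj : G.Adj v w := hUuniv v hv w hwv
      have hmem : s(v, w) ∈ B' := by
        by_contra hmem
        exact hnadj (SimpleGraph.deleteEdges_adj.2 ⟨hadj, fun h => hmem (Finset.mem_coe.1 h)⟩)
      exact ⟨s(v, w), hmem, Sym2.mem_mk_left v w⟩
    have : Nonempty (Sym2 V) := ⟨s(v₀, v₀)⟩
    choose! e he using key
    have he1 : ∀ v ∈ U, e v ∈ B' := fun v hv => (he v hv).1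
    have he2 : ∀ v ∈ U, v ∈ e v := fun v hv => (he v hv).2
    have hfib : ∀ b ∈ U.image e, (U.filter (fun v => e v = b)).card ≤ 2 := by
      intro b hb
      induction b using Sym2.ind with
      | _ a c =>
        have hsub2 : U.filter (fun v => e v = s(a, c)) ⊆ {a, c} := by
          intro v hv
          rw [Finset.mem_filter] at hv
          have := he2 v hv.1
          rw [hv.2, Sym2.mem_iff] at this
          rcases this with h | h <;> simp [h]
        calc (U.filter (fun v => e v = s(a, c))).card ≤ ({a, c} : Finset V).card :=
              Finset.card_le_card hsub2
          _ ≤ 2 := by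
              refine le_trans (Finset.card_insert_le a {c}) ?_
              simp
    have himg : U.image e ⊆ B' := by
      intro s hs
      obtain ⟨v, hv, rfl⟩ := Finset.mem_image.1 hs
      exact he1 v hv
    have hcount : t ≤ 2 * B'.card := by
      calc t = U.card := hUcard.symm
        _ ≤ 2 * (U.image e).card := Finset.card_le_mul_card_image U 2 hfib
        _ ≤ 2 * B'.card := by
            have := Finset.card_le_card himg
            omega
    omega
end

section
/- For the complete graph K_n with n ≥ 3, the Roman bondage number is ⌈n/2⌉. -/
open SimpleGraph Finset

/-! ### Auxiliary lemmas -/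

lemma rdnSet_nonempty {V : Type*} (G : SimpleGraph V) [Fintype V] :
    {w | ∃ f : V → ℕ, IsRDF G f ∧ ∑ v, f v = w}.Nonempty := by
  refine ⟨∑ _v : V, 1, fun _ => 1, ⟨fun v => one_le_two, fun v h => by simp at h⟩, rfl⟩

lemma two_le_sum_rdf {n : ℕ} (hn : 2 ≤ n) (G : SimpleGraph (Fin n)) (f : Fin n → ℕ)
    (hf : IsRDF G f) : 2 ≤ ∑ v, f v := by
  by_contra h
  push_neg at h
  by_cases hz : ∃ v, f v = 0
  · obtain ⟨v, hv⟩ := hz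
    obtain ⟨u, -, hu⟩ := hf.2 v hv
    have : f u ≤ ∑ v, f v := Finset.single_le_sum (fun _ _ => Nat.zero_le _) (mem_univ u)
    omega
  · push_neg at hz
    have : ∀ v ∈ (univ : Finset (Fin n)), 1 ≤ f v := fun v _ => Nat.one_le_iff_ne_zero.mpr (hz v)
    have hle : (n : ℕ) ≤ ∑ v, f v := by
      calc (n:ℕ) = ∑ _v : Fin n, 1 := by simp
        _ ≤ ∑ v, f v := Finset.sum_le_sum this
    omega

lemma two_le_rdn {n : ℕ} (hn : 2 ≤ n) (G : SimpleGraph (Fin n)) :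
    2 ≤ romanDomNum G := by
  refine le_csInf (rdnSet_nonempty G) ?_
  rintro w ⟨f, hf, rfl⟩
  exact two_le_sum_rdf hn G f hf

lemma rdn_le_two_of_universal {n : ℕ} (G : SimpleGraph (Fin n)) (v : Fin n)
    (hv : ∀ u, u ≠ v → G.Adj v u) : romanDomNum G ≤ 2 := by
  refine Nat.sInf_le ⟨fun u => if u = v then 2 else 0, ⟨?_, ?_⟩, ?_⟩
  · intro u; dsimp only; split <;> omega
  · intro u hu
    have huv : u ≠ v := by intro h; subst h; simp at hu
    exact ⟨v, (hv u huv).symm, if_pos rfl⟩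
  · simp

lemma three_le_rdn {n : ℕ} (hn : 3 ≤ n) (G : SimpleGraph (Fin n))
    (h : ∀ v, ∃ u, u ≠ v ∧ ¬ G.Adj v u) : 3 ≤ romanDomNum G := by
  refine le_csInf (rdnSet_nonempty G) ?_
  rintro w ⟨f, hf, rfl⟩
  by_cases h2 : ∃ u, f u = 2
  · obtain ⟨u, hu⟩ := h2
    obtain ⟨w, hwu, hadj⟩ := h u
    have hpair : ∀ a b : Fin n, a ≠ b → f a + f b ≤ ∑ v, f v := by
      intro a b hab
      calc f a + f b = ∑ v ∈ ({a, b} : Finset (Fin n)), f v := (Finset.sum_pair hab).symm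
        _ ≤ ∑ v, f v := Finset.sum_le_sum_of_subset (subset_univ _)
    by_cases hw0 : f w = 0
    · obtain ⟨u', hadj', hu'⟩ := hf.2 w hw0
      have : u' ≠ u := by rintro rfl; exact hadj hadj'.symm
      have := hpair u u' (Ne.symm this)
      omega
    · have := hpair u w (Ne.symm hwu)
      omega
  · push_neg at h2
    have hz : ∀ v, 1 ≤ f v := by
      intro v
      rcases Nat.eq_zero_or_pos (f v) with h0 | h1
      · obtain ⟨u, -, hu⟩ := hf.2 v h0; exact absurd hu (h2 u)
      · exact h1
    have hle : (n : ℕ) ≤ ∑ v, f v := by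
      calc (n:ℕ) = ∑ _v : Fin n, 1 := by simp
        _ ≤ ∑ v, f v := Finset.sum_le_sum (fun v _ => hz v)
    omega

lemma cover_edges (n : ℕ) (hn : 3 ≤ n) :
    ∃ B : Finset (Sym2 (Fin n)), ↑B ⊆ (⊤ : SimpleGraph (Fin n)).edgeSet ∧
      B.card = (n + 1) / 2 ∧ ∀ v : Fin n, ∃ u, u ≠ v ∧ s(v, u) ∈ B := by
  have hn0 : 0 < n := by omega
  set p : ℕ → Fin n := fun k => ⟨k % n, Nat.mod_lt _ hn0⟩ with hp
  set e : ℕ → Sym2 (Fin n) := fun i => s(p (2 * i), p (2 * i + 1)) with he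
  have hval1 : ∀ i < (n + 1) / 2, (p (2 * i)).val = 2 * i := by
    intro i hi
    simp only [hp]
    exact Nat.mod_eq_of_lt (by omega)
  have hval2 : ∀ i < (n + 1) / 2, (p (2 * i + 1)).val = 2 * i + 1 ∨
      ((p (2 * i + 1)).val = 0 ∧ 2 * i + 1 = n) := by
    intro i hi
    rcases lt_or_ge (2 * i + 1) n with h | h
    · exact Or.inl (Nat.mod_eq_of_lt h)
    · right
      have : 2 * i + 1 = n := by omega
      simp [hp, this]
  refine ⟨(Finset.range ((n + 1) / 2)).image e, ?_, ?_, ?_⟩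
  · intro x hx
    simp only [coe_image, Set.mem_image, mem_coe, mem_range] at hx
    obtain ⟨i, hi, rfl⟩ := hx
    simp only [he, SimpleGraph.mem_edgeSet, top_adj]
    intro hcontra
    have h1 := hval1 i hi
    have h2 := hval2 i hi
    have := congrArg Fin.val hcontra
    omega
  · rw [Finset.card_image_of_injOn, Finset.card_range]
    intro i hi j hj hij
    simp only [mem_coe, mem_range] at hi hj
    simp only [he, Sym2.eq_iff] at hij
    have h1i := hval1 i hi; have h1j := hval1 j hj
    have h2i := hval2 i hi; have h2j := hval2 j hj
    rcases hij with ⟨ha, hb⟩ | ⟨ha, hb⟩ <;>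
      [skip; skip] <;>
      · have ha' := congrArg Fin.val ha
        have hb' := congrArg Fin.val hb
        omega
  · intro v
    have hiv : v.val / 2 < (n + 1) / 2 := by omega
    set i := v.val / 2 with hi
    have h1 := hval1 i hiv
    have h2 := hval2 i hiv
    have hmem : e i ∈ (Finset.range ((n + 1) / 2)).image e :=
      Finset.mem_image_of_mem e (Finset.mem_range.mpr hiv)
    rcases Nat.even_or_odd v.val with ⟨k, hk⟩ | ⟨k, hk⟩
    · have hv : v = p (2 * i) := by
        apply Fin.ext; omega
      refine ⟨p (2 * i + 1), ?_, ?_⟩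
      · intro hcontra
        have := congrArg Fin.val hcontra
        have hv' := congrArg Fin.val hv
        omega
      · rw [hv]; exact hmem
    · have hv : v = p (2 * i + 1) := by
        apply Fin.ext
        have : v.val = 2 * i + 1 := by omega
        rcases h2 with h | ⟨h, hn'⟩
        · omega
        · omega
      refine ⟨p (2 * i), ?_, ?_⟩
      · intro hcontra
        have := congrArg Fin.val hcontra
        have hv' := congrArg Fin.val hv
        omega
      · have : s(v, p (2 * i)) = e i := by rw [hv, he]; exact Sym2.eq_swap
        rw [this]; exact hmem

def edgeVerts' {V : Type*} [DecidableEq V] : Sym2 V → Finset V :=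
  Sym2.lift ⟨fun a b => {a, b}, fun a b => Finset.pair_comm a b⟩

lemma uncovered_vertex {n : ℕ} (B : Finset (Sym2 (Fin n))) (h : 2 * B.card < n) :
    ∃ v : Fin n, ∀ u, s(v, u) ∉ B := by
  set C : Finset (Fin n) := B.biUnion edgeVerts' with hC
  have hcard : C.card < n := by
    have h1 : C.card ≤ ∑ e ∈ B, (edgeVerts' e).card := Finset.card_biUnion_le
    have h2 : ∀ e ∈ B, (edgeVerts' e).card ≤ 2 := by
      intro e _
      induction e using Sym2.inductionOn with
      | hf a b => simpa [edgeVerts'] using Finset.card_insert_le a {b}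
    have h3 : ∑ e ∈ B, (edgeVerts' e).card ≤ ∑ _e ∈ B, 2 := Finset.sum_le_sum h2
    simp only [Finset.sum_const, smul_eq_mul] at h3
    omega
  have : ∃ v : Fin n, v ∉ C := by
    by_contra hcon
    push_neg at hcon
    have : (univ : Finset (Fin n)) ⊆ C := fun v _ => hcon v
    have := Finset.card_le_card this
    simp [Fintype.card_fin] at this
    omega
  obtain ⟨v, hv⟩ := this
  refine ⟨v, fun u hmem => hv ?_⟩
  refine Finset.mem_biUnion.mpr ⟨s(v, u), hmem, ?_⟩
  simp [edgeVerts']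

lemma rdn_top {n : ℕ} (hn : 3 ≤ n) : romanDomNum (⊤ : SimpleGraph (Fin n)) = 2 := by
  have hn0 : 0 < n := by omega
  refine le_antisymm ?_ (two_le_rdn (by omega) _)
  exact rdn_le_two_of_universal _ ⟨0, hn0⟩ (fun u hu => by
    simp only [top_adj]
    exact fun h => hu (by rw [h]))

theorem roman_bondage_complete (n : ℕ) (hn : 3 ≤ n) :
    romanBondage (⊤ : SimpleGraph (Fin n)) = ((n + 1) / 2 : ℕ) := by
  apply le_antisymm
  · -- upper bound
    obtain ⟨B, hBe, hBcard, hBcov⟩ := cover_edges n hn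
    apply sInf_le
    refine ⟨B, hBe, by rw [hBcard], ?_⟩
    rw [rdn_top hn]
    have h3 : 3 ≤ romanDomNum ((⊤ : SimpleGraph (Fin n)).deleteEdges ↑B) := by
      refine three_le_rdn hn _ ?_
      intro v
      obtain ⟨u, hu, hmem⟩ := hBcov v
      refine ⟨u, hu, ?_⟩
      simp only [deleteEdges_adj, top_adj, Finset.mem_coe, not_and, not_not]
      intro _; exact hmem
    omega
  · -- lower bound
    apply le_sInf
    rintro k ⟨B, hBe, rfl, hgt⟩
    rw [Nat.cast_le]
    by_contra hcon
    push_neg at hcon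
    have hsmall : 2 * B.card < n := by omega
    obtain ⟨v, hv⟩ := uncovered_vertex B hsmall
    have huniv : ∀ u, u ≠ v → ((⊤ : SimpleGraph (Fin n)).deleteEdges ↑B).Adj v u := by
      intro u hu
      simp only [deleteEdges_adj, top_adj, Finset.mem_coe]
      exact ⟨fun h => hu h.symm, hv u⟩
    have hle := rdn_le_two_of_universal _ v huniv
    rw [rdn_top hn] at hgt
    omega
end

section
/- For the grid graph P_2 × P_n (Cartesian product of a path on 2 vertices with a path on n vertices), γ_R(P_2 × P_n) = n + 1. -/
open SimpleGraph Finset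

/-- Abstract description of a Roman dominating function on the 2×n grid:
`a` is row 0, `b` is row 1. -/
def RDFn (n : ℕ) (a b : ℕ → ℕ) : Prop :=
  (∀ j < n, a j ≤ 2 ∧ b j ≤ 2) ∧
  (∀ j < n, a j = 0 → b j = 2 ∨ (j + 1 < n ∧ a (j+1) = 2) ∨ (1 ≤ j ∧ a (j-1) = 2)) ∧
  (∀ j < n, b j = 0 → a j = 2 ∨ (j + 1 < n ∧ b (j+1) = 2) ∨ (1 ≤ j ∧ b (j-1) = 2))

def Wt (a b : ℕ → ℕ) (n : ℕ) : ℕ := ∑ j ∈ Finset.range n, (a j + b j)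

lemma Wt_succ (a b : ℕ → ℕ) (n : ℕ) : Wt a b (n+1) = Wt a b n + (a n + b n) :=
  Finset.sum_range_succ _ n

def upd (a : ℕ → ℕ) (k : ℕ) : ℕ → ℕ := fun j => if j = k then max (a k) (a (k+1)) else a j

lemma cutA {a b : ℕ → ℕ} {N k : ℕ} (hk : k + 2 ≤ N)
    (hbnd : ∀ j < N, a j ≤ 2 ∧ b j ≤ 2)
    (hA : ∀ j < N, a j = 0 → b j = 2 ∨ (j + 1 < N ∧ a (j+1) = 2) ∨ (1 ≤ j ∧ a (j-1) = 2)) :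
    ∀ j < k + 1, upd a k j = 0 →
      upd b k j = 2 ∨ (j + 1 < k + 1 ∧ upd a k (j+1) = 2) ∨ (1 ≤ j ∧ upd a k (j-1) = 2) := by
  intro j hj h0
  by_cases hjk : j = k
  · subst hjk
    rw [upd, if_pos rfl] at h0
    have hz : a j = 0 ∧ a (j+1) = 0 := by omega
    rcases hA j (by omega) hz.1 with hb | ⟨_, h2⟩ | ⟨h1, h2⟩
    · left
      rw [upd, if_pos rfl]
      have := (hbnd (j+1) (by omega)).2
      omega
    · omega
    · right; right
      refine ⟨h1, ?_⟩
      rw [upd, if_neg (by omega)]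
      exact h2
  · have hjlt : j < k := by omega
    rw [upd, if_neg hjk] at h0
    rcases hA j (by omega) h0 with hb | ⟨hlt, h2⟩ | ⟨h1, h2⟩
    · left; rw [upd, if_neg hjk]; exact hb
    · right; left
      refine ⟨by omega, ?_⟩
      by_cases hjk1 : j + 1 = k
      · rw [upd, if_pos hjk1]
        have := (hbnd (k+1) (by omega)).1
        rw [hjk1] at h2
        omega
      · rw [upd, if_neg hjk1]; exact h2
    · right; right
      refine ⟨h1, ?_⟩
      rw [upd, if_neg (by omega)]
      exact h2

lemma cut {a b : ℕ → ℕ} {N k : ℕ} (hk : k + 2 ≤ N) (h : RDFn N a b) :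
    RDFn (k+1) (upd a k) (upd b k) := by
  obtain ⟨hbnd, hA, hB⟩ := h
  refine ⟨?_, cutA hk hbnd hA, cutA hk (fun j hj => (hbnd j hj).symm) hB⟩
  · intro j hj
    have h1 := hbnd k (by omega)
    have h2 := hbnd (k+1) (by omega)
    have h3 := hbnd j (by omega)
    constructor <;> rw [upd] <;> split <;> omega

lemma cutW (a b : ℕ → ℕ) (k : ℕ) : Wt (upd a k) (upd b k) (k+1) ≤ Wt a b (k+2) := by
  rw [Wt, Wt, Finset.sum_range_succ, Finset.sum_range_succ, Finset.sum_range_succ]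
  have hs : ∑ j ∈ Finset.range k, (upd a k j + upd b k j)
      = ∑ j ∈ Finset.range k, (a j + b j) := by
    refine Finset.sum_congr rfl fun j hj => ?_
    rw [Finset.mem_range] at hj
    rw [upd, upd, if_neg (by omega), if_neg (by omega)]
  rw [hs, upd, upd, if_pos rfl, if_pos rfl]
  omega

lemma restrict {a b : ℕ → ℕ} {N : ℕ} (h : RDFn (N+1) a b) (ha : a N ≠ 2) (hb : b N ≠ 2) :
    RDFn N a b := by
  obtain ⟨hbnd, hA, hB⟩ := h
  refine ⟨fun j hj => hbnd j (by omega), fun j hj h0 => ?_, fun j hj h0 => ?_⟩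
  · rcases hA j (by omega) h0 with h' | ⟨h1, h2⟩ | h'
    · exact Or.inl h'
    · have hne : j + 1 ≠ N := by intro he; rw [he] at h2; exact ha h2
      exact Or.inr (Or.inl ⟨by omega, h2⟩)
    · exact Or.inr (Or.inr h')
  · rcases hB j (by omega) h0 with h' | ⟨h1, h2⟩ | h'
    · exact Or.inl h'
    · have hne : j + 1 ≠ N := by intro he; rw [he] at h2; exact hb h2
      exact Or.inr (Or.inl ⟨by omega, h2⟩)
    · exact Or.inr (Or.inr h')

lemma lowerAux : ∀ n, 1 ≤ n → ∀ a b : ℕ → ℕ, RDFn n a b → n + 1 ≤ Wt a b n := by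
  intro n
  induction n using Nat.strong_induction_on with
  | _ n ih =>
    rcases n with - | (- | (- | m))
    · intro h; omega
    · intro _ a b h
      have h1 := h.2.1 0 (by omega)
      have h2 := h.2.2 0 (by omega)
      have hb := h.1 0 (by omega)
      rw [Wt, Finset.sum_range_one]
      omega
    · intro _ a b h
      have ha0 := h.2.1 0 (by omega)
      have ha1 := h.2.1 1 (by omega)
      have hb0 := h.2.2 0 (by omega)
      have hb1 := h.2.2 1 (by omega)
      have hc0 := h.1 0 (by omega)
      have hc1 := h.1 1 (by omega)
      rw [show (1:ℕ) - 1 = 0 from rfl] at ha1 hb1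
      rw [show (0:ℕ) + 1 = 1 from rfl] at ha0 hb0
      rw [Wt, Finset.sum_range_succ, Finset.sum_range_one]
      omega
    · intro _ a b h
      by_cases hA2 : 2 ≤ a (m+2) + b (m+2)
      · have hcut := cut (N := m+3) (k := m) (by omega) h
        have hIH := ih (m+1) (by omega) (by omega) _ _ hcut
        have hW := cutW a b m
        rw [Wt_succ]
        omega
      · by_cases hA1 : a (m+2) + b (m+2) = 1
        · have hb2 := h.1 (m+2) (by omega)
          have hres : RDFn (m+2) a b := restrict h (by omega) (by omega)
          have hIH := ih (m+2) (by omega) (by omega) _ _ hres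
          rw [Wt_succ]
          omega
        · have ha0 : a (m+2) = 0 := by omega
          have hb0 : b (m+2) = 0 := by omega
          have h1 := h.2.1 (m+2) (by omega) ha0
          have h2 := h.2.2 (m+2) (by omega) hb0
          rw [show m + 2 - 1 = m + 1 by omega] at h1 h2
          have ha1 : a (m+1) = 2 := by omega
          have hb1 : b (m+1) = 2 := by omega
          rcases m with - | k
          · rw [Wt, Finset.sum_range_succ, Finset.sum_range_succ, Finset.sum_range_one]
            simp only [Nat.zero_add] at *
            omega
          · have hcut := cut (N := k+4) (k := k) (by omega) h
            have hIH := ih (k+1) (by omega) (by omega) _ _ hcut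
            have hW := cutW a b k
            rw [Wt_succ, Wt_succ]
            have e1 : a (k+2) = 2 := ha1
            have e2 : b (k+2) = 2 := hb1
            have e3 : a (k+3) = 0 := ha0
            have e4 : b (k+3) = 0 := hb0
            omega


def aU (n : ℕ) : ℕ → ℕ := fun j =>
  (if j % 4 = 0 then 2 else 0) + (if j + 1 = n ∧ n % 4 = 0 then 1 else 0)
def bU (n : ℕ) : ℕ → ℕ := fun j =>
  (if j % 4 = 2 then 2 else 0) + (if j + 1 = n ∧ n % 4 = 2 then 1 else 0)

lemma constrRDF (n : ℕ) : RDFn n (aU n) (bU n) := by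
  refine ⟨fun j hj => ?_, fun j hj h0 => ?_, fun j hj h0 => ?_⟩
  · constructor <;> · simp only [aU, bU]; split_ifs <;> omega
  · -- a j = 0
    unfold aU at h0
    have hj4 : j % 4 ≠ 0 := by by_contra hc; rw [if_pos hc] at h0; omega
    have hfix : ¬ (j + 1 = n ∧ n % 4 = 0) := by
      by_contra hc; rw [if_neg hj4, if_pos hc] at h0; omega
    have h4 : j % 4 = 1 ∨ j % 4 = 2 ∨ j % 4 = 3 := by omega
    rcases h4 with h4 | h4 | h4
    · right; right
      refine ⟨by omega, ?_⟩
      unfold aU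
      rw [if_pos (by omega)]
      split_ifs <;> omega
    · left
      unfold bU
      rw [if_pos h4]
      split_ifs <;> omega
    · right; left
      have hlt : j + 1 < n := by
        rcases Nat.lt_or_ge (j+1) n with h | h
        · exact h
        · exfalso; have : j + 1 = n := by omega
          exact hfix ⟨this, by omega⟩
      refine ⟨hlt, ?_⟩
      unfold aU
      rw [if_pos (by omega)]
      split_ifs <;> omega
  · unfold bU at h0
    have hj4 : j % 4 ≠ 2 := by by_contra hc; rw [if_pos hc] at h0; omega
    have hfix : ¬ (j + 1 = n ∧ n % 4 = 2) := by
      by_contra hc; rw [if_neg hj4, if_pos hc] at h0; omega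
    have h4 : j % 4 = 0 ∨ j % 4 = 1 ∨ j % 4 = 3 := by omega
    rcases h4 with h4 | h4 | h4
    · left
      unfold aU
      rw [if_pos h4]
      split_ifs <;> omega
    · right; left
      have hlt : j + 1 < n := by
        rcases Nat.lt_or_ge (j+1) n with h | h
        · exact h
        · exfalso; have : j + 1 = n := by omega
          exact hfix ⟨this, by omega⟩
      refine ⟨hlt, ?_⟩
      unfold bU
      rw [if_pos (by omega)]
      split_ifs <;> omega
    · right; right
      refine ⟨by omega, ?_⟩
      unfold bU
      rw [if_pos (by omega)]
      split_ifs <;> omega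

lemma baseSum (n : ℕ) :
    ∑ j ∈ range n, ((if j % 4 = 0 then 2 else 0) + (if j % 4 = 2 then 2 else 0))
      = n + n % 2 := by
  induction n with
  | zero => simp
  | succ n ih =>
    rw [Finset.sum_range_succ, ih]
    have h4 : n % 4 = 0 ∨ n % 4 = 1 ∨ n % 4 = 2 ∨ n % 4 = 3 := by omega
    rcases h4 with h | h | h | h <;>
      [rw [if_pos h, if_neg (by omega)]; rw [if_neg (by omega), if_neg (by omega)];
       rw [if_neg (by omega), if_pos h]; rw [if_neg (by omega), if_neg (by omega)]] <;> omega

lemma fixSum (n : ℕ) (hn : 1 ≤ n) (P : Prop) [Decidable P] :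
    ∑ j ∈ range n, (if j + 1 = n ∧ P then 1 else 0) = if P then 1 else 0 := by
  obtain ⟨m, rfl⟩ := Nat.exists_eq_succ_of_ne_zero (show n ≠ 0 by omega)
  rw [Finset.sum_range_succ]
  rw [Finset.sum_eq_zero (fun j hj => by
    rw [Finset.mem_range] at hj
    exact if_neg (by rintro ⟨h1, -⟩; omega))]
  simp

lemma constrW (n : ℕ) (hn : 1 ≤ n) :
    ∑ j ∈ range n, (aU n j + bU n j) = n + 1 := by
  unfold aU bU
  have h : ∀ j, ((if j % 4 = 0 then 2 else 0) + (if j + 1 = n ∧ n % 4 = 0 then 1 else 0))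
      + ((if j % 4 = 2 then 2 else 0) + (if j + 1 = n ∧ n % 4 = 2 then 1 else 0))
      = ((if j % 4 = 0 then 2 else 0) + (if j % 4 = 2 then 2 else 0))
      + ((if j + 1 = n ∧ n % 4 = 0 then 1 else 0) + (if j + 1 = n ∧ n % 4 = 2 then 1 else 0)) := by
    intro j; ring
  simp only [h]
  rw [Finset.sum_add_distrib, baseSum, Finset.sum_add_distrib, fixSum n hn, fixSum n hn]
  split_ifs <;> omega


def rowA {n : ℕ} (f : Fin 2 × Fin n → ℕ) : ℕ → ℕ :=
  fun j => if h : j < n then f (0, ⟨j, h⟩) else 0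
def rowB {n : ℕ} (f : Fin 2 × Fin n → ℕ) : ℕ → ℕ :=
  fun j => if h : j < n then f (1, ⟨j, h⟩) else 0

lemma sumEq {n : ℕ} (f : Fin 2 × Fin n → ℕ) :
    ∑ v, f v = Wt (rowA f) (rowB f) n := by
  rw [Wt, ← Fin.sum_univ_eq_sum_range (fun j => rowA f j + rowB f j) n]
  rw [Fintype.sum_prod_type, Fin.sum_univ_two, ← Finset.sum_add_distrib]
  refine Finset.sum_congr rfl fun j _ => ?_
  simp [rowA, rowB, j.isLt]

lemma toRDFn {n : ℕ} {f : Fin 2 × Fin n → ℕ}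
    (hf : IsRDF (pathGraph 2 □ pathGraph n) f) : RDFn n (rowA f) (rowB f) := by
  obtain ⟨hbnd, hdom⟩ := hf
  have key : ∀ (i : Fin 2) (j : ℕ) (h : j < n), f (i, ⟨j, h⟩) = 0 →
      (∃ i' : Fin 2, i' ≠ i ∧ f (i', ⟨j, h⟩) = 2) ∨
      (∃ h2 : j + 1 < n, f (i, ⟨j + 1, h2⟩) = 2) ∨
      (1 ≤ j ∧ ∃ h2 : j - 1 < n, f (i, ⟨j - 1, h2⟩) = 2) := by
    intro i j h h0
    obtain ⟨⟨ui, uj⟩, hadj, hu⟩ := hdom _ h0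
    rw [boxProd_adj] at hadj
    dsimp only at hadj
    rcases hadj with ⟨hadj, he⟩ | ⟨hadj, he⟩
    · rw [pathGraph_adj] at hadj
      refine Or.inl ⟨ui, fun hc => by rw [hc] at hadj; omega, ?_⟩
      rw [← he] at hu
      exact hu
    · rw [pathGraph_adj] at hadj
      have hv : ((⟨j, h⟩ : Fin n) : ℕ) = j := rfl
      rw [hv] at hadj
      rcases hadj with h' | h'
      · right; left
        have hlt : j + 1 < n := by have := uj.isLt; omega
        have huj : uj = ⟨j + 1, hlt⟩ := Fin.ext (show uj.val = j + 1 by omega)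
        rw [← he, huj] at hu
        exact ⟨hlt, hu⟩
      · right; right
        have h1 : 1 ≤ j := by omega
        have hlt : j - 1 < n := by omega
        have huj : uj = ⟨j - 1, hlt⟩ := Fin.ext (show uj.val = j - 1 by omega)
        rw [← he, huj] at hu
        exact ⟨h1, hlt, hu⟩
  refine ⟨fun j hj => ?_, fun j hj h0 => ?_, fun j hj h0 => ?_⟩
  · constructor <;> · simp only [rowA, rowB, dif_pos hj]; apply hbnd
  · rw [rowA, dif_pos hj] at h0
    rcases key 0 j hj h0 with ⟨i', hne, h3⟩ | ⟨h2, h3⟩ | ⟨h1, h2, h3⟩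
    · left
      rw [rowB, dif_pos hj]
      have hi1 : i' = 1 := by
        have hv : i'.val ≠ 0 := fun hc => hne (Fin.ext hc)
        have := i'.isLt
        exact Fin.ext (show i'.val = 1 by omega)
      rw [← hi1]
      exact h3
    · right; left; refine ⟨h2, ?_⟩; rw [rowA, dif_pos h2]; exact h3
    · right; right; refine ⟨h1, ?_⟩; rw [rowA, dif_pos h2]; exact h3
  · rw [rowB, dif_pos hj] at h0
    rcases key 1 j hj h0 with ⟨i', hne, h3⟩ | ⟨h2, h3⟩ | ⟨h1, h2, h3⟩
    · left
      rw [rowA, dif_pos hj]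
      have hi0 : i' = 0 := by
        have hv : i'.val ≠ 1 := fun hc => hne (Fin.ext hc)
        have := i'.isLt
        exact Fin.ext (show i'.val = 0 by omega)
      rw [← hi0]
      exact h3
    · right; left; refine ⟨h2, ?_⟩; rw [rowB, dif_pos h2]; exact h3
    · right; right; refine ⟨h1, ?_⟩; rw [rowB, dif_pos h2]; exact h3

def ofRows {n : ℕ} (a b : ℕ → ℕ) : Fin 2 × Fin n → ℕ :=
  fun p => if p.1 = 0 then a p.2.val else b p.2.val

lemma ofRDFn {n : ℕ} {a b : ℕ → ℕ} (h : RDFn n a b) :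
    IsRDF (pathGraph 2 □ pathGraph n) (ofRows a b) := by
  obtain ⟨hbnd, hA, hB⟩ := h
  constructor
  · rintro ⟨i, j⟩
    have := hbnd j.val j.isLt
    simp only [ofRows]
    split <;> omega
  · rintro ⟨i, j⟩ h0
    simp only [ofRows] at h0
    by_cases hi : i = 0
    · rw [if_pos hi] at h0
      rcases hA j.val j.isLt h0 with h' | ⟨h1, h2⟩ | ⟨h1, h2⟩
      · exact ⟨(1, j), by
          rw [boxProd_adj]
          exact Or.inl ⟨by rw [pathGraph_adj, hi]; left; rfl, rfl⟩,
          by simp [ofRows, h']⟩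
      · exact ⟨(0, ⟨j.val + 1, h1⟩), by
          rw [boxProd_adj]
          exact Or.inr ⟨by rw [pathGraph_adj]; left; rfl, hi⟩,
          by simp [ofRows, h2]⟩
      · exact ⟨(0, ⟨j.val - 1, by omega⟩), by
          rw [boxProd_adj]
          exact Or.inr ⟨by rw [pathGraph_adj]; right; simp; omega, hi⟩,
          by simp [ofRows, h2]⟩
    · have hi1 : i = 1 := by omega
      rw [if_neg hi] at h0
      rcases hB j.val j.isLt h0 with h' | ⟨h1, h2⟩ | ⟨h1, h2⟩
      · exact ⟨(0, j), by
          rw [boxProd_adj]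
          exact Or.inl ⟨by rw [pathGraph_adj, hi1]; right; rfl, rfl⟩,
          by simp [ofRows, h']⟩
      · exact ⟨(1, ⟨j.val + 1, h1⟩), by
          rw [boxProd_adj]
          exact Or.inr ⟨by rw [pathGraph_adj]; left; rfl, hi1⟩,
          by simp [ofRows, h2]⟩
      · exact ⟨(1, ⟨j.val - 1, by omega⟩), by
          rw [boxProd_adj]
          exact Or.inr ⟨by rw [pathGraph_adj]; right; simp; omega, hi1⟩,
          by simp [ofRows, h2]⟩

lemma ofRowsSum {n : ℕ} (a b : ℕ → ℕ) :
    ∑ v, ofRows (n := n) a b v = ∑ j ∈ range n, (a j + b j) := by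
  rw [sumEq, Wt]
  refine Finset.sum_congr rfl fun j hj => ?_
  rw [Finset.mem_range] at hj
  simp [rowA, rowB, ofRows, hj]

theorem roman_domination_grid (n : ℕ) (hn : 1 ≤ n) :
    romanDomNum (pathGraph 2 □ pathGraph n) = n + 1 := by
  have hmem : (n + 1) ∈ {w | ∃ f : Fin 2 × Fin n → ℕ,
      IsRDF (pathGraph 2 □ pathGraph n) f ∧ ∑ v, f v = w} :=
    ⟨ofRows (aU n) (bU n), ofRDFn (constrRDF n), by rw [ofRowsSum]; exact constrW n hn⟩
  rw [romanDomNum]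
  apply le_antisymm
  · exact Nat.sInf_le hmem
  · obtain ⟨f, hf, hw⟩ := Nat.sInf_mem (⟨n + 1, hmem⟩ : Set.Nonempty _)
    rw [← hw, sumEq]
    exact lowerAux n hn _ _ (toRDFn hf)
end

section
/- For n ≥ 2, the Roman bondage number of the grid graph P_2 × P_n is 2. -/
set_option maxHeartbeats 1000000


open SimpleGraph Finset

/-! ### Auxiliary development -/

namespace RomanAux

/-- Abstract "Roman dominating" condition for a `2 × n` grid encoded as a
function `ℕ → ℕ → ℕ` (row, column). -/
def Core (n : ℕ) (f : ℕ → ℕ → ℕ) : Prop :=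
  ∀ r, r ≤ 1 → ∀ c, c < n → f r c = 0 →
    f (1 - r) c = 2 ∨ (c + 1 < n ∧ f r (c + 1) = 2) ∨ (1 ≤ c ∧ f r (c - 1) = 2)

/-- Total weight of a grid function. -/
def W (n : ℕ) (f : ℕ → ℕ → ℕ) : ℕ := ∑ c ∈ Finset.range n, (f 0 c + f 1 c)

/-- Lower bound: any Roman dominating function on the `2 × n` grid has weight
at least `n + 1`. -/
lemma core_lb : ∀ n, 1 ≤ n → ∀ f : ℕ → ℕ → ℕ, Core n f → n + 1 ≤ W n f := by
  intro n
  induction n using Nat.strong_induction_on with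
  | _ n ih =>
    obtain _ | (_ | (_ | m)) := n
    · omega
    · intro _ f hf
      have h0 := hf 0 (by norm_num) 0 (by norm_num)
      have h1 := hf 1 (le_refl 1) 0 (by norm_num)
      have hW : W 1 f = f 0 0 + f 1 0 := by simp [W]
      show 1 + 1 ≤ W 1 f
      norm_num at h0 h1
      omega
    · intro _ f hf
      have h00 := hf 0 (by norm_num) 0 (by norm_num)
      have h10 := hf 1 (le_refl 1) 0 (by norm_num)
      have h01 := hf 0 (by norm_num) 1 (by norm_num)
      have h11 := hf 1 (le_refl 1) 1 (by norm_num)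
      have hW : W 2 f = f 0 0 + f 1 0 + (f 0 1 + f 1 1) := by
        simp [W, Finset.sum_range_succ]
      show 2 + 1 ≤ W 2 f
      norm_num at h00 h10 h01 h11
      omega
    · intro _ f hf
      show m + 3 + 1 ≤ W (m + 3) f
      set g : ℕ → ℕ → ℕ := fun r i =>
        if 1 ≤ i then f r (i + 2) else if f r 1 = 2 ∧ f r 2 = 0 then 1 else f r 2 with hgdef
      have hg1 : ∀ r i, 1 ≤ i → g r i = f r (i + 2) := by
        intro r i hi; simp [hgdef, hi]
      have hg0 : ∀ r, g r 0 = if f r 1 = 2 ∧ f r 2 = 0 then 1 else f r 2 := by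
        intro r; simp [hgdef]
      have hgCore : Core (m + 1) g := by
        intro r hr i hi h0
        by_cases h1i : 1 ≤ i
        · rw [hg1 r i h1i] at h0
          rcases hf r hr (i + 2) (by omega) h0 with h | ⟨hc, h⟩ | ⟨hc, h⟩
          · left; rw [hg1 (1 - r) i h1i]; exact h
          · right; left
            refine ⟨by omega, ?_⟩
            rw [hg1 r (i + 1) (by omega), show i + 1 + 2 = i + 2 + 1 by omega]
            exact h
          · -- h : f r (i + 2 - 1) = 2, i.e. f r (i + 1) = 2
            rw [show i + 2 - 1 = i + 1 by omega] at h
            rcases Nat.lt_or_ge i 2 with h2 | h2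
            · have hi1 : i = 1 := by omega
              subst hi1
              right; right
              refine ⟨le_refl 1, ?_⟩
              have h' : f r 2 = 2 := by norm_num at h; exact h
              rw [show (1 : ℕ) - 1 = 0 from rfl, hg0 r, if_neg (by omega)]
              exact h'
            · right; right
              refine ⟨by omega, ?_⟩
              rw [hg1 r (i - 1) (by omega), show i - 1 + 2 = i + 1 by omega]
              exact h
        · have hi0 : i = 0 := by omega
          subst hi0
          rw [hg0 r] at h0
          by_cases hc : f r 1 = 2 ∧ f r 2 = 0
          · rw [if_pos hc] at h0; exact absurd h0 one_ne_zero
          · rw [if_neg hc] at h0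
            have h1ne : f r 1 ≠ 2 := fun h1 => hc ⟨h1, h0⟩
            rcases hf r hr 2 (by omega) h0 with h | ⟨hcc, h⟩ | ⟨hcc, h⟩
            · left
              rw [hg0 (1 - r), if_neg (by omega)]
              exact h
            · right; left
              refine ⟨by omega, ?_⟩
              rw [hg1 r 1 (le_refl 1)]
              exact h
            · rw [show (2 : ℕ) - 1 = 1 from rfl] at h
              exact absurd h h1ne
      have hIH := ih (m + 1) (by omega) (by omega) g hgCore
      have hW3 : W (m + 3) f = (f 0 0 + f 1 0) + (f 0 1 + f 1 1) + (f 0 2 + f 1 2)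
          + ∑ i ∈ Finset.range m, (f 0 (i + 3) + f 1 (i + 3)) := by
        simp only [W]
        rw [Finset.sum_range_succ' _ (m + 2), Finset.sum_range_succ' _ (m + 1),
          Finset.sum_range_succ' _ m]
        rw [Finset.sum_congr rfl (fun i _ => by norm_num :
          ∀ i ∈ Finset.range m, f 0 (i + 1 + 1 + 1) + f 1 (i + 1 + 1 + 1)
            = f 0 (i + 3) + f 1 (i + 3))]
        norm_num
        ring
      have hWg : W (m + 1) g = (g 0 0 + g 1 0)
          + ∑ i ∈ Finset.range m, (f 0 (i + 3) + f 1 (i + 3)) := by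
        simp only [W]
        rw [Finset.sum_range_succ' _ m]
        rw [Finset.sum_congr rfl (fun i _ => by
          rw [hg1 0 (i+1) (by omega), hg1 1 (i+1) (by omega)] :
          ∀ i ∈ Finset.range m, g 0 (i + 1) + g 1 (i + 1) = f 0 (i + 3) + f 1 (i + 3))]
        ring
      have hrow0 : (f 0 1 = 2 ∧ f 0 2 = 0 ∧ g 0 0 = 1) ∨ g 0 0 = f 0 2 := by
        by_cases hc : f 0 1 = 2 ∧ f 0 2 = 0
        · left; exact ⟨hc.1, hc.2, by rw [hg0 0, if_pos hc]⟩
        · right; rw [hg0 0, if_neg hc]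
      have hrow1 : (f 1 1 = 2 ∧ f 1 2 = 0 ∧ g 1 0 = 1) ∨ g 1 0 = f 1 2 := by
        by_cases hc : f 1 1 = 2 ∧ f 1 2 = 0
        · left; exact ⟨hc.1, hc.2, by rw [hg0 1, if_pos hc]⟩
        · right; rw [hg0 1, if_neg hc]
      have h00 := hf 0 (by norm_num) 0 (by omega)
      have h10 := hf 1 (le_refl 1) 0 (by omega)
      have hlt1 : (1 : ℕ) < m + 3 := by omega
      simp only [hlt1, true_and] at h00 h10
      norm_num at h00 h10
      omega

/-- The periodic diagonal pattern with phase `t`. -/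
def pat (n t r c : ℕ) : ℕ :=
  if c % 4 = (t + 2 * r) % 4 then 2
  else if c = 0 ∧ (t + 2 * r) % 4 = 3 then 1
  else if c = n - 1 ∧ c % 4 = (t + 2 * r + 3) % 4 then 1
  else 0

lemma pat_le (n t r c : ℕ) : pat n t r c ≤ 2 := by
  unfold pat; split_ifs <;> omega

lemma pat_cover (n t r c : ℕ) (hr : r ≤ 1) (hc : c < n) (h0 : pat n t r c = 0) :
    (c % 4 = (t + 2 * r + 2) % 4 ∧ pat n t (1 - r) c = 2)
    ∨ (c % 4 = (t + 2 * r + 3) % 4 ∧ c + 1 < n ∧ pat n t r (c + 1) = 2)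
    ∨ (c % 4 = (t + 2 * r + 1) % 4 ∧ 1 ≤ c ∧ pat n t r (c - 1) = 2) := by
  unfold pat at h0
  split_ifs at h0 with h1 h2 h3
  all_goals try omega
  · have h4 : c % 4 = (t + 2 * r + 2) % 4 ∨ c % 4 = (t + 2 * r + 3) % 4
        ∨ c % 4 = (t + 2 * r + 1) % 4 := by omega
    rcases h4 with h | h | h
    · left
      refine ⟨h, ?_⟩
      unfold pat
      rw [if_pos (by omega : c % 4 = (t + 2 * (1 - r)) % 4)]
    · right; left
      have hne : c ≠ n - 1 := fun hh => h3 ⟨hh, h⟩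
      refine ⟨h, by omega, ?_⟩
      unfold pat
      rw [if_pos (by omega : (c + 1) % 4 = (t + 2 * r) % 4)]
    · right; right
      have hc1 : 1 ≤ c := by
        rcases Nat.eq_zero_or_pos c with h0' | h0'
        · exfalso; apply h2; subst h0'; constructor; rfl; omega
        · omega
      refine ⟨h, hc1, ?_⟩
      unfold pat
      rw [if_pos (by omega : (c - 1) % 4 = (t + 2 * r) % 4)]

lemma parity_sum : ∀ n b : ℕ, b ≤ 1 →
    (∑ c ∈ Finset.range n, (if c % 2 = b then 2 else 0)) + 2 * (n % 2) * b = n + n % 2 := by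
  intro n
  induction n using Nat.strong_induction_on with
  | _ n ih =>
    obtain _ | (_ | m) := n
    · intro b hb; simp
    · intro b hb
      interval_cases b <;> simp
    · intro b hb
      have hih := ih m (by omega) b hb
      rw [Finset.sum_range_succ, Finset.sum_range_succ]
      have hmm : (if m % 2 = b then 2 else 0) + (if (m + 1) % 2 = b then 2 else 0) = 2 := by
        rcases Nat.mod_two_eq_zero_or_one m with h | h <;> interval_cases b <;>
          simp [h, Nat.add_mod] <;> omega
      have hmod : (m + 2) % 2 = m % 2 := by omega
      rw [hmod]
      omega

lemma pat_weight (n t : ℕ) (hn : 2 ≤ n) : W n (pat n t) ≤ n + 1 := by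
  have hpoint : ∀ c ∈ Finset.range n, pat n t 0 c + pat n t 1 c ≤
      (if c % 2 = t % 2 then 2 else 0) +
      ((if c = 0 then t % 2 else 0) +
       (if c = n - 1 then (if (n + t) % 2 = 0 then 1 else 0) else 0)) := by
    intro c _
    unfold pat
    split_ifs <;> omega
  have hsum := Finset.sum_le_sum hpoint
  have e1 : (∑ c ∈ Finset.range n, (if c = 0 then t % 2 else 0)) = t % 2 := by
    rw [Finset.sum_ite_eq' (Finset.range n) 0 (fun _ => t % 2)]
    rw [if_pos (Finset.mem_range.2 (by omega))]
  have e2 : (∑ c ∈ Finset.range n, (if c = n - 1 then (if (n + t) % 2 = 0 then 1 else 0) else 0))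
      = (if (n + t) % 2 = 0 then 1 else 0) := by
    rw [Finset.sum_ite_eq' (Finset.range n) (n - 1) (fun _ => if (n + t) % 2 = 0 then 1 else 0)]
    rw [if_pos (Finset.mem_range.2 (by omega))]
  have esplit : ∑ c ∈ Finset.range n,
      ((if c % 2 = t % 2 then 2 else 0) +
      ((if c = 0 then t % 2 else 0) +
       (if c = n - 1 then (if (n + t) % 2 = 0 then 1 else 0) else 0)))
      = (∑ c ∈ Finset.range n, (if c % 2 = t % 2 then 2 else 0)) +
        ((∑ c ∈ Finset.range n, (if c = 0 then t % 2 else 0)) +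
         (∑ c ∈ Finset.range n,
           (if c = n - 1 then (if (n + t) % 2 = 0 then 1 else 0) else 0))) := by
    rw [Finset.sum_add_distrib, Finset.sum_add_distrib]
  rw [esplit, e1, e2] at hsum
  have hp := parity_sum n (t % 2) (by omega)
  have hW : W n (pat n t) = ∑ c ∈ Finset.range n, (pat n t 0 c + pat n t 1 c) := rfl
  rw [hW]
  have hq : ((n + t) % 2 = 0 ∧ (if (n + t) % 2 = 0 then (1:ℕ) else 0) = 1) ∨
      ((n + t) % 2 = 1 ∧ (if (n + t) % 2 = 0 then (1:ℕ) else 0) = 0) := by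
    rcases Nat.mod_two_eq_zero_or_one (n + t) with h | h
    · left; exact ⟨h, by rw [if_pos h]⟩
    · right; exact ⟨h, by rw [if_neg (by omega)]⟩
  have hpd : (n % 2 = 0 ∧ 2 * (n % 2) * (t % 2) = 0) ∨
      (t % 2 = 0 ∧ 2 * (n % 2) * (t % 2) = 0) ∨
      (n % 2 = 1 ∧ t % 2 = 1 ∧ 2 * (n % 2) * (t % 2) = 2) := by
    rcases Nat.mod_two_eq_zero_or_one n with h | h <;>
      rcases Nat.mod_two_eq_zero_or_one t with h' | h'
    · left; rw [h]; norm_num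
    · left; rw [h]; norm_num
    · right; left; rw [h']; norm_num
    · right; right; rw [h, h']; norm_num
  omega

/-! ### Transfer between the grid graph and `ℕ`-encoded functions -/

lemma grid_adj {n : ℕ} {u v : Fin 2 × Fin n} :
    (pathGraph 2 □ pathGraph n).Adj u v ↔
      ((((u.1 : ℕ) + 1 = (v.1 : ℕ) ∨ (v.1 : ℕ) + 1 = (u.1 : ℕ)) ∧ (u.2 : ℕ) = (v.2 : ℕ)) ∨
       (((u.2 : ℕ) + 1 = (v.2 : ℕ) ∨ (v.2 : ℕ) + 1 = (u.2 : ℕ)) ∧ (u.1 : ℕ) = (v.1 : ℕ))) := by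
  rw [boxProd_adj, pathGraph_adj, pathGraph_adj]
  constructor
  · rintro (⟨h1, h2⟩ | ⟨h1, h2⟩)
    · exact Or.inl ⟨h1, congrArg Fin.val h2⟩
    · exact Or.inr ⟨h1, congrArg Fin.val h2⟩
  · rintro (⟨h1, h2⟩ | ⟨h1, h2⟩)
    · exact Or.inl ⟨h1, Fin.ext h2⟩
    · exact Or.inr ⟨h1, Fin.ext h2⟩

lemma sum_eq_W {n : ℕ} (f : Fin 2 × Fin n → ℕ) (F : ℕ → ℕ → ℕ)
    (hF : ∀ (r : Fin 2) (c : Fin n), F (r : ℕ) (c : ℕ) = f (r, c)) :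
    ∑ v, f v = W n F := by
  rw [Fintype.sum_prod_type]
  rw [Fin.sum_univ_two]
  have h0 : ∑ c : Fin n, f (0, c) = ∑ c ∈ Finset.range n, F 0 c := by
    rw [← Fin.sum_univ_eq_sum_range (fun c => F 0 c) n]
    apply Finset.sum_congr rfl
    intro c _
    exact (hF 0 c).symm
  have h1 : ∑ c : Fin n, f (1, c) = ∑ c ∈ Finset.range n, F 1 c := by
    rw [← Fin.sum_univ_eq_sum_range (fun c => F 1 c) n]
    apply Finset.sum_congr rfl
    intro c _
    exact (hF 1 c).symm
  rw [h0, h1, ← Finset.sum_add_distrib]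
  rfl

/-- The encoding of a `Fin`-indexed function as an `ℕ`-indexed one. -/
def enc {n : ℕ} (f : Fin 2 × Fin n → ℕ) : ℕ → ℕ → ℕ := fun r c =>
  if h : r < 2 ∧ c < n then f (⟨r, h.1⟩, ⟨c, h.2⟩) else 0

lemma enc_spec {n : ℕ} (f : Fin 2 × Fin n → ℕ) (r : Fin 2) (c : Fin n) :
    enc f (r : ℕ) (c : ℕ) = f (r, c) := by
  unfold enc
  rw [dif_pos ⟨r.isLt, c.isLt⟩]

lemma enc_eval {n : ℕ} (f : Fin 2 × Fin n → ℕ) (r c : ℕ) (hr : r < 2) (hc : c < n) :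
    enc f r c = f (⟨r, hr⟩, ⟨c, hc⟩) := by
  unfold enc
  rw [dif_pos ⟨hr, hc⟩]

/-! ### Upper bound constructions -/

/-- The pattern as a function on grid vertices. -/
def patF (n t : ℕ) (v : Fin 2 × Fin n) : ℕ := pat n t (v.1 : ℕ) (v.2 : ℕ)

lemma patF_isRDF (n t : ℕ) (hn : 2 ≤ n) (S : Set (Sym2 (Fin 2 × Fin n)))
    (hrung : ∀ u v : Fin 2 × Fin n, u.2 = v.2 → (u.2 : ℕ) % 2 = t % 2 → s(u, v) ∉ S)
    (hhor : ∀ u v : Fin 2 × Fin n, u.1 = v.1 → (u.2 : ℕ) + 1 = (v.2 : ℕ) →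
      ((u.2 : ℕ) % 4 = (t + 2 * (u.1 : ℕ)) % 4 ∨
       (u.2 : ℕ) % 4 = (t + 2 * (u.1 : ℕ) + 3) % 4) → s(u, v) ∉ S) :
    IsRDF ((pathGraph 2 □ pathGraph n).deleteEdges S) (patF n t) := by
  constructor
  · intro v; exact pat_le n t _ _
  · rintro ⟨r, c⟩ h0
    have hr : (r : ℕ) ≤ 1 := by omega
    rcases pat_cover n t (r : ℕ) (c : ℕ) hr c.isLt h0 with ⟨hres, h2⟩ | ⟨hres, hlt, h2⟩ |
      ⟨hres, hge, h2⟩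
    · -- rung cover
      refine ⟨(⟨1 - (r : ℕ), by omega⟩, c), ?_, h2⟩
      rw [SimpleGraph.deleteEdges_adj]
      constructor
      · rw [grid_adj]; left; constructor
        · simp; omega
        · rfl
      · exact hrung (r, c) (⟨1 - (r : ℕ), by omega⟩, c) rfl (show (c : ℕ) % 2 = t % 2 by omega)
    · -- right cover
      refine ⟨(r, ⟨(c : ℕ) + 1, hlt⟩), ?_, h2⟩
      rw [SimpleGraph.deleteEdges_adj]
      constructor
      · rw [grid_adj]; right; constructor
        · left; rfl
        · rfl
      · exact hhor (r, c) (r, ⟨(c : ℕ) + 1, hlt⟩) rfl rfl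
          (Or.inr (show (c : ℕ) % 4 = (t + 2 * (r : ℕ) + 3) % 4 by omega))
    · -- left cover
      refine ⟨(r, ⟨(c : ℕ) - 1, by omega⟩), ?_, h2⟩
      rw [SimpleGraph.deleteEdges_adj]
      constructor
      · rw [grid_adj]; right; constructor
        · right; simp; omega
        · rfl
      · rw [Sym2.eq_swap]
        refine hhor (r, ⟨(c : ℕ) - 1, by omega⟩) (r, c) rfl
          (show (c : ℕ) - 1 + 1 = (c : ℕ) by omega)
          (Or.inl (show ((c : ℕ) - 1) % 4 = (t + 2 * (r : ℕ)) % 4 by omega))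

lemma patF_sum (n t : ℕ) (hn : 2 ≤ n) : ∑ v, patF n t v ≤ n + 1 := by
  rw [sum_eq_W (patF n t) (pat n t) (fun r c => rfl)]
  exact pat_weight n t hn

/-! ### `romanDomNum` helpers -/

lemma rdn_nonempty {V : Type*} (G : SimpleGraph V) [Fintype V] :
    {w | ∃ f : V → ℕ, IsRDF G f ∧ ∑ v, f v = w}.Nonempty :=
  ⟨_, fun _ => 1, ⟨fun _ => one_le_two, fun _ h => absurd h one_ne_zero⟩, rfl⟩

lemma rdn_le {V : Type*} (G : SimpleGraph V) [Fintype V] (f : V → ℕ) (hf : IsRDF G f)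
    (m : ℕ) (hm : ∑ v, f v ≤ m) : romanDomNum G ≤ m :=
  le_trans (Nat.sInf_le ⟨f, hf, rfl⟩) hm

lemma rdn_ge {V : Type*} (G : SimpleGraph V) [Fintype V] (m : ℕ)
    (h : ∀ f : V → ℕ, IsRDF G f → m ≤ ∑ v, f v) : m ≤ romanDomNum G := by
  apply le_csInf (rdn_nonempty G)
  rintro w ⟨f, hf, rfl⟩
  exact h f hf

/-! ### Lower bound for the grid -/

lemma grid_lb (n : ℕ) (hn : 1 ≤ n) :
    n + 1 ≤ romanDomNum (pathGraph 2 □ pathGraph n) := by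
  apply rdn_ge
  intro f hf
  rw [sum_eq_W f (enc f) (enc_spec f)]
  apply core_lb n hn
  intro r hr c hc h0
  rw [enc_eval f r c (by omega) hc] at h0
  obtain ⟨u, hadj, hu2⟩ := hf.2 _ h0
  rw [grid_adj] at hadj
  obtain ⟨hrow, hcol⟩ | ⟨hcol, hrow⟩ := hadj
  · left
    have h1 : (u.1 : ℕ) = 1 - r := by
      have := u.1.isLt
      simp at hrow hcol
      omega
    have h2 : (u.2 : ℕ) = c := by simpa using hcol.symm
    rw [enc_eval f (1 - r) c (by omega) hc]
    have : ((⟨1 - r, by omega⟩ : Fin 2), (⟨c, hc⟩ : Fin n)) = u := by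
      apply Prod.ext
      · exact Fin.ext (by simp [h1])
      · exact Fin.ext (by simp [h2])
    rw [this]
    exact hu2
  · simp only [Fin.val_mk] at hcol hrow
    rcases hcol with h | h
    · right; left
      have hlt : c + 1 < n := by rw [h]; exact u.2.isLt
      refine ⟨hlt, ?_⟩
      rw [enc_eval f r (c + 1) (by omega) hlt]
      have : ((⟨r, by omega⟩ : Fin 2), (⟨c + 1, hlt⟩ : Fin n)) = u := by
        apply Prod.ext
        · exact Fin.ext (by simp [hrow.symm])
        · exact Fin.ext (by simp [h])
      rw [this]
      exact hu2
    · right; right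
      refine ⟨by omega, ?_⟩
      rw [enc_eval f r (c - 1) (by omega) (by omega)]
      have : ((⟨r, by omega⟩ : Fin 2), (⟨c - 1, by omega⟩ : Fin n)) = u := by
        apply Prod.ext
        · exact Fin.ext (by simp [hrow.symm])
        · exact Fin.ext (by simp; omega)
      rw [this]
      exact hu2

end RomanAux

open RomanAux in
theorem roman_bondage_grid (n : ℕ) (hn : 2 ≤ n) :
    romanBondage (pathGraph 2 □ pathGraph n) = 2 := by
  have hGE : n + 1 ≤ romanDomNum (pathGraph 2 □ pathGraph n) := grid_lb n (by omega)
  have hGLE : romanDomNum (pathGraph 2 □ pathGraph n) ≤ n + 1 := by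
    have h := patF_isRDF n 0 hn ∅ (fun _ _ _ _ => Set.notMem_empty _)
      (fun _ _ _ _ _ => Set.notMem_empty _)
    rw [SimpleGraph.deleteEdges_empty] at h
    exact rdn_le _ (patF n 0) h (n + 1) (patF_sum n 0 hn)
  -- the two distinguished vertices in columns 0 and 1
  have h0n : 0 < n := by omega
  have h1n : 1 < n := by omega
  set c0 : Fin n := ⟨0, h0n⟩ with hc0
  set c1 : Fin n := ⟨1, h1n⟩ with hc1
  set e0 : Sym2 (Fin 2 × Fin n) := s(((0 : Fin 2), c0), ((0 : Fin 2), c1)) with he0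
  set e1 : Sym2 (Fin 2 × Fin n) := s(((1 : Fin 2), c0), ((1 : Fin 2), c1)) with he1
  set B : Finset (Sym2 (Fin 2 × Fin n)) := {e0, e1} with hB
  have hne : e0 ≠ e1 := by
    rw [he0, he1]
    intro heq
    rw [Sym2.eq_iff] at heq
    rcases heq with ⟨ha, hb⟩ | ⟨ha, hb⟩ <;>
      · have := congrArg (fun p : Fin 2 × Fin n => (p.1 : ℕ)) ha
        simp at this
  have hBcard : B.card = 2 := by
    rw [hB, Finset.card_insert_of_notMem (by simp [hne]), Finset.card_singleton]
  have hBsub : ↑B ⊆ (pathGraph 2 □ pathGraph n).edgeSet := by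
    intro e he
    rw [Finset.coe_insert, Finset.coe_singleton] at he
    rcases he with h | h
    · subst h
      rw [SimpleGraph.mem_edgeSet, grid_adj]
      right
      exact ⟨Or.inl rfl, rfl⟩
    · rw [Set.mem_singleton_iff] at h
      subst h
      rw [SimpleGraph.mem_edgeSet, grid_adj]
      right
      exact ⟨Or.inl rfl, rfl⟩
  -- lower bound for the graph with B removed
  have hBlb : n + 2 ≤ romanDomNum ((pathGraph 2 □ pathGraph n).deleteEdges ↑B) := by
    apply rdn_ge
    intro f hf
    -- column 0 contributes at least 2
    have hmemB : ∀ r : Fin 2, s((r, c0), (r, c1)) ∈ (↑B : Set (Sym2 (Fin 2 × Fin n))) := by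
      intro r
      fin_cases r
      · rw [hB]; simp [he0]
      · rw [hB]; simp [he1]
    have hcol0 : ∀ r : Fin 2, f (r, c0) = 0 → f (⟨1 - (r : ℕ), by omega⟩, c0) = 2 := by
      intro r h0
      obtain ⟨u, hadj, hu2⟩ := hf.2 _ h0
      rw [SimpleGraph.deleteEdges_adj] at hadj
      obtain ⟨hadj, hnotB⟩ := hadj
      replace hadj := grid_adj.mp hadj
      have hfst : (((r, c0).1 : Fin 2) : ℕ) = (r : ℕ) := rfl
      have hsnd : (((r, c0).2 : Fin n) : ℕ) = 0 := rfl
      rcases hadj with ⟨hrow, hcol⟩ | ⟨hcol, hrow⟩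
      · have heq1 : (⟨1 - (r : ℕ), by omega⟩ : Fin 2) = u.1 := by
          apply Fin.ext
          have := u.1.isLt
          have hr2 := r.isLt
          simp only [hfst] at hrow
          simp only [Fin.val_mk]
          omega
        have h2 : c0 = u.2 := Fin.ext (by rw [hc0]; simp only [Fin.val_mk]; omega)
        have heq : ((⟨1 - (r : ℕ), by omega⟩ : Fin 2), c0) = u := by rw [heq1, h2]
        rw [heq]
        exact hu2
      · -- horizontal neighbor of column 0 must be column 1, but that edge is deleted
        exfalso
        have hu2c : (u.2 : ℕ) = 1 := by omega
        have hu1 : u.1 = r := Fin.ext (by rw [← hfst]; omega)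
        have hueq : u = (r, c1) := by
          have : u.2 = c1 := Fin.ext (by rw [hc1]; simp only [Fin.val_mk]; omega)
          rw [← hu1, ← this]
        apply hnotB
        rw [hueq]
        exact hmemB r
    -- the shifted function is a Core function on n - 1 columns
    have hcore : Core (n - 1) (fun r i => enc f r (i + 1)) := by
      intro r hr i hi h0
      have h0' : f ((⟨r, by omega⟩ : Fin 2), (⟨i + 1, by omega⟩ : Fin n)) = 0 := by
        have h0'' : enc f r (i + 1) = 0 := h0
        rwa [enc_eval f r (i + 1) (by omega) (by omega)] at h0''
      obtain ⟨u, hadj, hu2⟩ := hf.2 _ h0'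
      rw [SimpleGraph.deleteEdges_adj] at hadj
      obtain ⟨hadj, hnotB⟩ := hadj
      replace hadj := grid_adj.mp hadj
      have hfst : (((⟨r, by omega⟩ : Fin 2), (⟨i + 1, by omega⟩ : Fin n)).1 : ℕ) = r := rfl
      have hsnd : (((⟨r, by omega⟩ : Fin 2), (⟨i + 1, by omega⟩ : Fin n)).2 : ℕ) = i + 1 := rfl
      rcases hadj with ⟨hrow, hcol⟩ | ⟨hcol, hrow⟩
      · left
        have h1 : (u.1 : ℕ) = 1 - r := by
          have := u.1.isLt
          omega
        have h2 : (u.2 : ℕ) = i + 1 := by omega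
        show enc f (1 - r) (i + 1) = 2
        rw [enc_eval f (1 - r) (i + 1) (by omega) (by omega)]
        have heq : ((⟨1 - r, by omega⟩ : Fin 2), (⟨i + 1, by omega⟩ : Fin n)) = u :=
          Prod.ext (Fin.ext (by simp only [Fin.val_mk]; omega))
            (Fin.ext (by simp only [Fin.val_mk]; omega))
        rw [← heq] at hu2
        exact hu2
      · rcases hcol with h | h
        · right; left
          have hlt : i + 1 + 1 < n := by
            have := u.2.isLt
            omega
          refine ⟨by omega, ?_⟩
          show enc f r (i + 1 + 1) = 2
          rw [enc_eval f r (i + 1 + 1) (by omega) (by omega)]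
          have heq : ((⟨r, by omega⟩ : Fin 2), (⟨i + 1 + 1, by omega⟩ : Fin n)) = u :=
            Prod.ext (Fin.ext (by simp only [Fin.val_mk]; omega))
              (Fin.ext (by simp only [Fin.val_mk]; omega))
          rw [← heq] at hu2
          exact hu2
        · -- left neighbor: u.2 = i; if i = 0 this is a deleted edge
          have hui : (u.2 : ℕ) = i := by omega
          rcases Nat.eq_zero_or_pos i with hi0 | hipos
          · exfalso
            subst hi0
            have hueq : u = ((⟨r, by omega⟩ : Fin 2), c0) := by
              apply Prod.ext
              · exact Fin.ext (by simp only [Fin.val_mk]; omega)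
              · exact Fin.ext (by rw [hc0]; simp only [Fin.val_mk]; omega)
            apply hnotB
            rw [hueq, Sym2.eq_swap]
            exact hmemB (⟨r, by omega⟩ : Fin 2)
          · right; right
            refine ⟨by omega, ?_⟩
            show enc f r (i - 1 + 1) = 2
            rw [enc_eval f r (i - 1 + 1) (by omega) (by omega)]
            have heq : ((⟨r, by omega⟩ : Fin 2), (⟨i - 1 + 1, by omega⟩ : Fin n)) = u :=
              Prod.ext (Fin.ext (by simp only [Fin.val_mk]; omega))
                (Fin.ext (by simp only [Fin.val_mk]; omega))
            rw [← heq] at hu2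
            exact hu2
    have hlb := core_lb (n - 1) (by omega) _ hcore
    have hWrfl : W (n - 1) (fun r i => enc f r (i + 1))
        = ∑ i ∈ Finset.range (n - 1), (enc f 0 (i + 1) + enc f 1 (i + 1)) := rfl
    rw [hWrfl] at hlb
    -- sum decomposition
    have hrange : Finset.range n = Finset.range ((n - 1) + 1) := by
      congr 1
      omega
    have hsplit : ∑ v, f v = (enc f 0 0 + enc f 1 0)
        + ∑ i ∈ Finset.range (n - 1), (enc f 0 (i + 1) + enc f 1 (i + 1)) := by
      rw [sum_eq_W f (enc f) (enc_spec f)]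
      unfold W
      rw [hrange, Finset.sum_range_succ' _ (n - 1)]
      ring
    have hcol0' : 2 ≤ enc f 0 0 + enc f 1 0 := by
      have ha := hcol0 0
      have hb := hcol0 1
      rw [enc_eval f 0 0 (by omega) (by omega), enc_eval f 1 0 (by omega) (by omega)]
      have ha' : f ((0 : Fin 2), c0) = 0 → f ((1 : Fin 2), c0) = 2 := by
        intro h
        have := ha h
        rwa [show (⟨1 - ((0 : Fin 2) : ℕ), by omega⟩ : Fin 2) = 1 from rfl] at this
      have hb' : f ((1 : Fin 2), c0) = 0 → f ((0 : Fin 2), c0) = 2 := by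
        intro h
        have := hb h
        rwa [show (⟨1 - ((1 : Fin 2) : ℕ), by omega⟩ : Fin 2) = 0 from rfl] at this
      have e00 : (⟨0, by omega⟩ : Fin 2) = (0 : Fin 2) := rfl
      have e11 : (⟨1, by omega⟩ : Fin 2) = (1 : Fin 2) := rfl
      have ec : (⟨0, h0n⟩ : Fin n) = c0 := rfl
      rw [e00, e11, ec]
      by_cases h : f ((0 : Fin 2), c0) = 0
      · have := ha' h; omega
      · by_cases h2 : f ((1 : Fin 2), c0) = 0
        · have := hb' h2; omega
        · omega
    omega
  -- single edge deletions don't change the Roman domination number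
  have hsingle : ∀ u v : Fin 2 × Fin n, (pathGraph 2 □ pathGraph n).Adj u v →
      romanDomNum ((pathGraph 2 □ pathGraph n).deleteEdges {s(u, v)}) ≤ n + 1 := by
    -- helper for horizontal edges with ordered columns
    have hhoriz : ∀ u v : Fin 2 × Fin n, u.1 = v.1 → (u.2 : ℕ) + 1 = (v.2 : ℕ) →
        romanDomNum ((pathGraph 2 □ pathGraph n).deleteEdges {s(u, v)}) ≤ n + 1 := by
      intro u v hrow hcol
      set t := (u.2 : ℕ) + 2 + 2 * (u.1 : ℕ) with ht
      refine rdn_le _ (patF n t) (patF_isRDF n t hn {s(u, v)} ?_ ?_) (n + 1) (patF_sum n t hn)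
      · -- no rung is the deleted edge
        intro a b hcols hpar hmem
        rw [Set.mem_singleton_iff, Sym2.eq_iff] at hmem
        rcases hmem with ⟨h1, h2⟩ | ⟨h1, h2⟩
        · have : (a.2 : ℕ) = (b.2 : ℕ) := congrArg Fin.val hcols
          have ha2 : (a.2 : ℕ) = (u.2 : ℕ) := congrArg Fin.val (congrArg Prod.snd h1)
          have hb2 : (b.2 : ℕ) = (v.2 : ℕ) := congrArg Fin.val (congrArg Prod.snd h2)
          omega
        · have : (a.2 : ℕ) = (b.2 : ℕ) := congrArg Fin.val hcols
          have ha2 : (a.2 : ℕ) = (v.2 : ℕ) := congrArg Fin.val (congrArg Prod.snd h1)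
          have hb2 : (b.2 : ℕ) = (u.2 : ℕ) := congrArg Fin.val (congrArg Prod.snd h2)
          omega
      · -- no used horizontal edge is the deleted edge
        intro a b hrows hcols hcond hmem
        rw [Set.mem_singleton_iff, Sym2.eq_iff] at hmem
        rcases hmem with ⟨h1, h2⟩ | ⟨h1, h2⟩
        · have ha1 : (a.1 : ℕ) = (u.1 : ℕ) := congrArg Fin.val (congrArg Prod.fst h1)
          have ha2 : (a.2 : ℕ) = (u.2 : ℕ) := congrArg Fin.val (congrArg Prod.snd h1)
          omega
        · have ha2 : (a.2 : ℕ) = (v.2 : ℕ) := congrArg Fin.val (congrArg Prod.snd h1)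
          have hb2 : (b.2 : ℕ) = (u.2 : ℕ) := congrArg Fin.val (congrArg Prod.snd h2)
          omega
    intro u v hadj
    replace hadj := grid_adj.mp hadj
    rcases hadj with ⟨hrow, hcol⟩ | ⟨hcol, hrow⟩
    · -- rung
      set t := (u.2 : ℕ) + 1 with ht
      refine rdn_le _ (patF n t) (patF_isRDF n t hn {s(u, v)} ?_ ?_) (n + 1) (patF_sum n t hn)
      · intro a b hcols hpar hmem
        rw [Set.mem_singleton_iff, Sym2.eq_iff] at hmem
        rcases hmem with ⟨h1, h2⟩ | ⟨h1, h2⟩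
        · have ha2 : (a.2 : ℕ) = (u.2 : ℕ) := congrArg Fin.val (congrArg Prod.snd h1)
          omega
        · have ha2 : (a.2 : ℕ) = (v.2 : ℕ) := congrArg Fin.val (congrArg Prod.snd h1)
          omega
      · intro a b hrows hcols hcond hmem
        rw [Set.mem_singleton_iff, Sym2.eq_iff] at hmem
        have hab : (a.1 : ℕ) = (b.1 : ℕ) := congrArg Fin.val hrows
        rcases hmem with ⟨h1, h2⟩ | ⟨h1, h2⟩
        · have ha1 : (a.1 : ℕ) = (u.1 : ℕ) := congrArg Fin.val (congrArg Prod.fst h1)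
          have hb1 : (b.1 : ℕ) = (v.1 : ℕ) := congrArg Fin.val (congrArg Prod.fst h2)
          omega
        · have ha1 : (a.1 : ℕ) = (v.1 : ℕ) := congrArg Fin.val (congrArg Prod.fst h1)
          have hb1 : (b.1 : ℕ) = (u.1 : ℕ) := congrArg Fin.val (congrArg Prod.fst h2)
          omega
    · rcases hcol with h | h
      · exact hhoriz u v (Fin.ext hrow) h
      · have := hhoriz v u (Fin.ext hrow.symm) h
        rwa [Sym2.eq_swap] at this
  -- assemble
  apply le_antisymm
  · apply sInf_le
    refine ⟨B, hBsub, by rw [hBcard]; rfl, ?_⟩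
    omega
  · apply le_sInf
    rintro k ⟨B', hB'sub, rfl, hgt⟩
    by_contra hlt
    push_neg at hlt
    have hcard : B'.card < 2 := by exact_mod_cast hlt
    interval_cases h : B'.card
    · rw [Finset.card_eq_zero] at h
      subst h
      rw [Finset.coe_empty, SimpleGraph.deleteEdges_empty] at hgt
      exact absurd hgt (lt_irrefl _)
    · rw [Finset.card_eq_one] at h
      obtain ⟨e, rfl⟩ := h
      rw [Finset.coe_singleton] at hgt hB'sub
      have hmem : e ∈ (pathGraph 2 □ pathGraph n).edgeSet := hB'sub (Set.mem_singleton e)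
      obtain ⟨u, v, rfl⟩ : ∃ u v, e = s(u, v) := Sym2.ind (fun u v => ⟨u, v, rfl⟩) e
      rw [SimpleGraph.mem_edgeSet] at hmem
      have := hsingle u v hmem
      omega
end

section
/- For any path (x,y,z) of length 2 in a graph G, b_R(G) ≤ d(x) + d(y) + d(z) − |N(y) ∩ N({x,z})| − |N(x) ∩ N(z)| − 1. -/
open SimpleGraph Finset

private lemma sum_three_lt {V : Type*} [Fintype V] [DecidableEq V] (f g : V → ℕ)
    (x y z : V) (hxy : x ≠ y) (hxz : x ≠ z) (hyz : y ≠ z)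
    (hout : ∀ v, v ≠ x → v ≠ y → v ≠ z → g v = f v)
    (hin : g x + g y + g z < f x + f y + f z) :
    ∑ v, g v < ∑ v, f v := by
  classical
  have hsub : ({x, y, z} : Finset V) ⊆ univ := subset_univ _
  have hx : x ∉ ({y, z} : Finset V) := by simp [hxy, hxz]
  have hy : y ∉ ({z} : Finset V) := by simp [hyz]
  have hgs : ∑ v ∈ ({x, y, z} : Finset V), g v = g x + (g y + g z) := by
    rw [show ({x, y, z} : Finset V) = insert x (insert y {z}) from rfl,
      sum_insert hx, sum_insert hy, sum_singleton]
  have hfs : ∑ v ∈ ({x, y, z} : Finset V), f v = f x + (f y + f z) := by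
    rw [show ({x, y, z} : Finset V) = insert x (insert y {z}) from rfl,
      sum_insert hx, sum_insert hy, sum_singleton]
  have hrest : ∑ v ∈ univ \ ({x, y, z} : Finset V), g v
      = ∑ v ∈ univ \ ({x, y, z} : Finset V), f v := by
    refine sum_congr rfl fun v hv => ?_
    simp only [mem_sdiff, mem_insert, mem_singleton] at hv
    push_neg at hv
    exact hout v hv.2.1 hv.2.2.1 hv.2.2.2
  rw [← Finset.sum_sdiff hsub (f := g), ← Finset.sum_sdiff hsub (f := f), hgs, hfs, hrest]
  omega

private lemma key_increase {V : Type*} [Fintype V] [DecidableEq V]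
    (G G' : SimpleGraph V) (x y z : V)
    (hxy : G.Adj x y) (hyz : G.Adj y z) (hxz : x ≠ z)
    (hsub : ∀ a b, G'.Adj a b → G.Adj a b)
    (hNx : ∀ w, ¬G'.Adj x w)
    (hNy : ∀ w, G'.Adj y w → G.Adj x w ∨ G.Adj z w)
    (hNz : ∀ w, G'.Adj z w → G.Adj x w) :
    romanDomNum G < romanDomNum G' := by
  classical
  have hxy' : x ≠ y := hxy.ne
  have hyz' : y ≠ z := hyz.ne
  have hG : romanDomNum G = sInf {w | ∃ f : V → ℕ, IsRDF G f ∧ ∑ v, f v = w} := rfl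
  have hG' : romanDomNum G' = sInf {w | ∃ f : V → ℕ, IsRDF G' f ∧ ∑ v, f v = w} := rfl
  have hne : {w | ∃ f : V → ℕ, IsRDF G' f ∧ ∑ v, f v = w}.Nonempty :=
    ⟨∑ _v : V, 1, fun _ => 1, ⟨fun _ => one_le_two, fun _ h => absurd h one_ne_zero⟩, rfl⟩
  obtain ⟨f, ⟨hle, hdom⟩, hfsum⟩ := Nat.sInf_mem hne
  have hmin : ∀ g : V → ℕ, IsRDF G' g → ∑ v, f v ≤ ∑ v, g v := by
    intro g hg
    rw [hfsum]
    exact Nat.sInf_le ⟨g, hg, rfl⟩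
  rw [hG, hG', ← hfsum]
  clear hG hG' hfsum hne
  have conc : ∀ g : V → ℕ, IsRDF G g → (∑ v, g v < ∑ v, f v) →
      sInf {w | ∃ f : V → ℕ, IsRDF G f ∧ ∑ v, f v = w} < ∑ v, f v := by
    intro g hg hlt
    have h1 : sInf {w | ∃ f : V → ℕ, IsRDF G f ∧ ∑ v, f v = w} ≤ ∑ v, g v :=
      Nat.sInf_le ⟨g, hg, rfl⟩
    exact h1.trans_lt hlt
  have hfx : f x = 1 := by
    have h0 : f x ≠ 0 := by
      intro h0
      obtain ⟨u, hu, -⟩ := hdom x h0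
      exact hNx u hu
    by_contra hne1
    have hfx2 : f x = 2 := by have := hle x; omega
    set g : V → ℕ := fun v => if v = x then 1 else f v with hgdef
    have hgR : IsRDF G' g := by
      refine ⟨fun v => ?_, fun v hv => ?_⟩
      · have := hle v; simp only [hgdef]; split_ifs <;> omega
      · have hvx : v ≠ x := by intro e; rw [e] at hv; simp [hgdef] at hv
        have hv0 : f v = 0 := by simpa [hgdef, hvx] using hv
        obtain ⟨u, hu, hu2⟩ := hdom v hv0
        have hux : u ≠ x := fun e => hNx v ((e ▸ hu).symm)
        exact ⟨u, hu, by simp [hgdef, hux, hu2]⟩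
    have hlt : ∑ v, g v < ∑ v, f v := by
      refine Finset.sum_lt_sum (fun i _ => ?_) ⟨x, mem_univ x, ?_⟩
      · simp only [hgdef]
        split_ifs with h
        · subst h; omega
        · omega
      · simp [hgdef, hfx2]
    exact absurd (hmin g hgR) (not_le.mpr hlt)
  by_cases hex : ∃ u, G.Adj x u ∧ f u = 2
  · obtain ⟨u, hxu, hu2⟩ := hex
    set g : V → ℕ := fun v => if v = x then 0 else f v with hgdef
    refine conc g ⟨fun v => ?_, fun v hv => ?_⟩ ?_
    · have := hle v; simp only [hgdef]; split_ifs <;> omega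
    · by_cases hvx : v = x
      · subst hvx; exact ⟨u, hxu, by simp [hgdef, hxu.ne', hu2]⟩
      · have hv0 : f v = 0 := by simpa [hgdef, hvx] using hv
        obtain ⟨u', hu', h2'⟩ := hdom v hv0
        have hu'x : u' ≠ x := fun e => by rw [e] at h2'; omega
        exact ⟨u', hsub v u' hu', by simp [hgdef, hu'x, h2']⟩
    · refine Finset.sum_lt_sum (fun i _ => ?_) ⟨x, mem_univ x, ?_⟩
      · simp only [hgdef]; split_ifs <;> omega
      · simp [hgdef]; omega
  · push_neg at hex
    have hfy2 : f y ≠ 2 := hex y hxy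
    have hfz : f z = 0 ∨ f z = 1 ∨ f z = 2 := by have := hle z; omega
    rcases hfz with h0 | h1 | h2
    · obtain ⟨u, hu, hu2⟩ := hdom z h0
      exact absurd hu2 (hex u (hNz u hu))
    · rcases (by have := hle y; omega : f y = 0 ∨ f y = 1) with hy0 | hy1
      · obtain ⟨u, hu, hu2⟩ := hdom y hy0
        have hzu : G.Adj z u := (hNy u hu).resolve_left (fun h => hex u h hu2)
        have huz : u ≠ z := fun e => by rw [e] at hu2; omega
        set g : V → ℕ := fun v => if v = z then 0 else f v with hgdef
        refine conc g ⟨fun v => ?_, fun v hv => ?_⟩ ?_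
        · have := hle v; simp only [hgdef]; split_ifs <;> omega
        · by_cases hvz : v = z
          · subst hvz; exact ⟨u, hzu, by simp [hgdef, huz, hu2]⟩
          · have hv0 : f v = 0 := by simpa [hgdef, hvz] using hv
            obtain ⟨u', hu', h2'⟩ := hdom v hv0
            have hu'z : u' ≠ z := fun e => by rw [e] at h2'; omega
            exact ⟨u', hsub v u' hu', by simp [hgdef, hu'z, h2']⟩
        · refine Finset.sum_lt_sum (fun i _ => ?_) ⟨z, mem_univ z, ?_⟩
          · simp only [hgdef]; split_ifs <;> omega
          · simp [hgdef]; omega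
      · set g : V → ℕ := fun v => if v = x then 0 else if v = y then 2
          else if v = z then 0 else f v with hgdef
        refine conc g ⟨fun v => ?_, fun v hv => ?_⟩ ?_
        · have := hle v; simp only [hgdef]; split_ifs <;> omega
        · by_cases hvx : v = x
          · subst hvx; exact ⟨y, hxy, by simp [hgdef, Ne.symm hxy']⟩
          · by_cases hvy : v = y
            · subst hvy; simp [hgdef, hvx] at hv
            · by_cases hvz : v = z
              · subst hvz; exact ⟨y, hyz.symm, by simp [hgdef, Ne.symm hxy']⟩
              · have hv0 : f v = 0 := by simpa [hgdef, hvx, hvy, hvz] using hv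
                obtain ⟨u', hu', h2'⟩ := hdom v hv0
                have hu'x : u' ≠ x := fun e => by rw [e] at h2'; omega
                have hu'y : u' ≠ y := fun e => by rw [e] at h2'; omega
                have hu'z : u' ≠ z := fun e => by rw [e] at h2'; omega
                exact ⟨u', hsub v u' hu', by simp [hgdef, hu'x, hu'y, hu'z, h2']⟩
        · refine sum_three_lt f g x y z hxy' hxz hyz' ?_ ?_
          · intro v h1v h2v h3v; simp [hgdef, h1v, h2v, h3v]
          · simp [hgdef, Ne.symm hxy', Ne.symm hxz, Ne.symm hyz']; omega
    · rcases (by have := hle y; omega : f y = 0 ∨ f y = 1) with hy0 | hy1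
      · obtain ⟨u, hu, hu2⟩ := hdom y hy0
        have hzu : G.Adj z u := (hNy u hu).resolve_left (fun h => hex u h hu2)
        have hux : u ≠ x := fun e => by rw [e] at hu2; omega
        have huz : u ≠ z := hzu.ne'
        set g : V → ℕ := fun v => if v = x then 2 else if v = z then 0 else f v with hgdef
        refine conc g ⟨fun v => ?_, fun v hv => ?_⟩ ?_
        · have := hle v; simp only [hgdef]; split_ifs <;> omega
        · by_cases hvx : v = x
          · subst hvx; simp [hgdef] at hv
          · by_cases hvz : v = z
            · subst hvz; exact ⟨u, hzu, by simp [hgdef, hux, huz, hu2]⟩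
            · have hv0 : f v = 0 := by simpa [hgdef, hvx, hvz] using hv
              obtain ⟨u', hu', h2'⟩ := hdom v hv0
              have hu'x : u' ≠ x := fun e => by rw [e] at h2'; omega
              by_cases hu'z : u' = z
              · subst hu'z
                exact ⟨x, (hNz v hu'.symm).symm, by simp [hgdef]⟩
              · exact ⟨u', hsub v u' hu', by simp [hgdef, hu'x, hu'z, h2']⟩
        · refine sum_three_lt f g x y z hxy' hxz hyz' ?_ ?_
          · intro v h1v h2v h3v; simp [hgdef, h1v, h3v]
          · simp [hgdef, Ne.symm hxy', Ne.symm hxz, Ne.symm hyz', hy0]; omega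
      · set g : V → ℕ := fun v => if v = x then 2 else if v = y then 0
          else if v = z then 1 else f v with hgdef
        refine conc g ⟨fun v => ?_, fun v hv => ?_⟩ ?_
        · have := hle v; simp only [hgdef]; split_ifs <;> omega
        · by_cases hvx : v = x
          · subst hvx; simp [hgdef] at hv
          · by_cases hvy : v = y
            · subst hvy; exact ⟨x, hxy.symm, by simp [hgdef]⟩
            · by_cases hvz : v = z
              · subst hvz; simp [hgdef, Ne.symm hxz, Ne.symm hyz'] at hv
              · have hv0 : f v = 0 := by simpa [hgdef, hvx, hvy, hvz] using hv
                obtain ⟨u', hu', h2'⟩ := hdom v hv0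
                have hu'x : u' ≠ x := fun e => by rw [e] at h2'; omega
                have hu'y : u' ≠ y := fun e => by rw [e] at h2'; omega
                by_cases hu'z : u' = z
                · subst hu'z
                  exact ⟨x, (hNz v hu'.symm).symm, by simp [hgdef]⟩
                · exact ⟨u', hsub v u' hu', by simp [hgdef, hu'x, hu'y, hu'z, h2']⟩
        · refine sum_three_lt f g x y z hxy' hxz hyz' ?_ ?_
          · intro v h1v h2v h3v; simp [hgdef, h1v, h2v, h3v]
          · simp [hgdef, Ne.symm hxy', Ne.symm hxz, Ne.symm hyz']; omega
theorem roman_bondage_path2_bound' {V : Type*} [Fintype V] [DecidableEq V]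
    (G : SimpleGraph V) [DecidableRel G.Adj]
    (x y z : V) (hxy : G.Adj x y) (hyz : G.Adj y z) (hxz : x ≠ z) :
    romanBondage G ≤
      ((G.degree x + G.degree y + G.degree z -
        (G.neighborFinset y ∩ (G.neighborFinset x ∪ G.neighborFinset z)).card -
        (G.neighborFinset x ∩ G.neighborFinset z).card - 1 : ℕ) : ℕ∞) := by
  classical
  set Nx := G.neighborFinset x with hNxd
  set Ny := G.neighborFinset y with hNyd
  set Nz := G.neighborFinset z with hNzd
  set im1 : Finset (Sym2 V) := Nx.image (fun w => s(x, w)) with him1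
  set im2 : Finset (Sym2 V) := (Ny \ (Nx ∪ Nz)).image (fun w => s(y, w)) with him2
  set im3 : Finset (Sym2 V) := (Nz \ Nx).image (fun w => s(z, w)) with him3
  set B : Finset (Sym2 V) := im1 ∪ (im2 ∪ im3) with hBdef
  have hinj : ∀ a : V, Function.Injective (fun w : V => s(a, w)) :=
    fun a w1 w2 h => Sym2.congr_right.mp h
  -- cardinality bound
  have hc1 : im1.card = G.degree x := by
    rw [him1, card_image_of_injective _ (hinj x)]; rfl
  have hc2 : im2.card + (Ny ∩ (Nx ∪ Nz)).card = G.degree y := by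
    rw [him2, card_image_of_injective _ (hinj y), card_sdiff_add_card_inter]; rfl
  have hc3 : im3.card + (Nz ∩ Nx).card = G.degree z := by
    rw [him3, card_image_of_injective _ (hinj z), card_sdiff_add_card_inter]; rfl
  have hover : (im1 ∩ (im2 ∪ im3)).Nonempty := by
    by_cases hadj : G.Adj x z
    · refine ⟨s(x, z), mem_inter.mpr ⟨?_, ?_⟩⟩
      · exact mem_image.mpr ⟨z, by simp [hNxd, hadj], rfl⟩
      · refine mem_union_right _ (mem_image.mpr ⟨x, ?_, Sym2.eq_swap⟩)
        simp only [mem_sdiff, hNzd, hNxd, mem_neighborFinset]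
        exact ⟨hadj.symm, fun h => G.irrefl h⟩
    · refine ⟨s(x, y), mem_inter.mpr ⟨?_, ?_⟩⟩
      · exact mem_image.mpr ⟨y, by simp [hNxd, hxy], rfl⟩
      · refine mem_union_left _ (mem_image.mpr ⟨x, ?_, Sym2.eq_swap⟩)
        simp only [mem_sdiff, mem_union, hNyd, hNxd, hNzd, mem_neighborFinset]
        exact ⟨hxy.symm, fun h => h.elim (fun h' => G.irrefl h') (fun h' => hadj h'.symm)⟩
  have hcard : B.card ≤ G.degree x + G.degree y + G.degree z -
      (Ny ∩ (Nx ∪ Nz)).card - (Nx ∩ Nz).card - 1 := by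
    have h2 := card_union_add_card_inter im1 (im2 ∪ im3)
    have h3 := card_union_le im2 im3
    have h4 : 1 ≤ (im1 ∩ (im2 ∪ im3)).card := card_pos.mpr hover
    have hAC : (Nx ∩ Nz).card = (Nz ∩ Nx).card := by rw [inter_comm]
    rw [hBdef]
    omega
  -- B consists of edges of G
  have hBsub : ↑B ⊆ G.edgeSet := by
    intro e he
    rw [Finset.mem_coe, hBdef] at he
    rcases mem_union.mp he with h | h
    · obtain ⟨w, hw, rfl⟩ := mem_image.mp h
      exact (mem_neighborFinset _ _ _).mp hw
    · rcases mem_union.mp h with h' | h'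
      · obtain ⟨w, hw, rfl⟩ := mem_image.mp h'
        exact (mem_neighborFinset _ _ _).mp (mem_sdiff.mp hw).1
      · obtain ⟨w, hw, rfl⟩ := mem_image.mp h'
        exact (mem_neighborFinset _ _ _).mp (mem_sdiff.mp hw).1
  -- properties of the graph with B deleted
  set G' := G.deleteEdges ↑B with hG'def
  have hsub : ∀ a b, G'.Adj a b → G.Adj a b := fun a b h => (deleteEdges_adj.mp h).1
  have hNx' : ∀ w, ¬G'.Adj x w := by
    intro w hw
    rw [hG'def, deleteEdges_adj] at hw
    refine hw.2 (Finset.mem_coe.mpr ?_)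
    exact mem_union_left _ (mem_image.mpr ⟨w, by simp [hNxd, hw.1], rfl⟩)
  have hNy' : ∀ w, G'.Adj y w → G.Adj x w ∨ G.Adj z w := by
    intro w hw
    rw [hG'def, deleteEdges_adj] at hw
    by_contra hcon
    push_neg at hcon
    refine hw.2 (Finset.mem_coe.mpr ?_)
    refine mem_union_right _ (mem_union_left _ (mem_image.mpr ⟨w, ?_, rfl⟩))
    simp only [mem_sdiff, mem_union, hNyd, hNxd, hNzd, mem_neighborFinset]
    exact ⟨hw.1, fun h => h.elim (fun h' => hcon.1 h') (fun h' => hcon.2 h')⟩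
  have hNz' : ∀ w, G'.Adj z w → G.Adj x w := by
    intro w hw
    rw [hG'def, deleteEdges_adj] at hw
    by_contra hcon
    refine hw.2 (Finset.mem_coe.mpr ?_)
    refine mem_union_right _ (mem_union_right _ (mem_image.mpr ⟨w, ?_, rfl⟩))
    simp only [mem_sdiff, hNzd, hNxd, mem_neighborFinset]
    exact ⟨hw.1, hcon⟩
  have hkey : romanDomNum G < romanDomNum G' :=
    key_increase G G' x y z hxy hyz hxz hsub hNx' hNy' hNz'
  have hmem : (B.card : ℕ∞) ∈ {k | ∃ B' : Finset (Sym2 V), ↑B' ⊆ G.edgeSet ∧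
      (B'.card : ℕ∞) = k ∧ romanDomNum (G.deleteEdges ↑B') > romanDomNum G} :=
    ⟨B, hBsub, rfl, hkey⟩
  have h1 : romanBondage G ≤ (B.card : ℕ∞) := sInf_le hmem
  exact h1.trans (by exact_mod_cast hcard)
end

section
/- For any connected graph G of diameter at least two, b_R(G) ≤ 2Δ(G) + δ(G) − 3. -/
open SimpleGraph Finset

lemma key_path {V : Type*} [Fintype V] [DecidableEq V] (G : SimpleGraph V) [DecidableRel G.Adj]
    {x y z : V} (hxy : G.Adj x y) (hyz : G.Adj y z) (hxz : x ≠ z) :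
    romanBondage G ≤ ((G.degree x + G.degree y + G.degree z - 3 : ℕ) : ℕ∞) := by
  have hxy' : x ≠ y := hxy.ne
  have hyz' : y ≠ z := hyz.ne
  set B : Finset (Sym2 V) :=
    G.incidenceFinset x ∪ (G.incidenceFinset y \ {s(y, z)}) ∪
      (G.incidenceFinset z \ {s(y, z)}) with hB
  have hBsub : ↑B ⊆ G.edgeSet := by
    intro e he
    simp only [hB, Finset.coe_union, Set.mem_union, Finset.mem_coe, Finset.mem_sdiff,
      SimpleGraph.mem_incidenceFinset, Finset.mem_singleton] at he
    rcases he with (he | he) | he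
    · exact G.incidenceSet_subset x he
    · exact G.incidenceSet_subset y he.1
    · exact G.incidenceSet_subset z he.1
  -- cardinality bound
  have hcard : B.card ≤ G.degree x + G.degree y + G.degree z - 3 := by
    have hsubB : B ⊆ G.incidenceFinset x ∪ ((G.incidenceFinset y \ {s(x, y), s(y, z)}) ∪
        (G.incidenceFinset z \ {s(y, z)})) := by
      intro e he
      simp only [hB, Finset.mem_union, Finset.mem_sdiff, SimpleGraph.mem_incidenceFinset,
        Finset.mem_singleton, Finset.mem_insert] at he ⊢
      rcases he with (he | ⟨he, hne⟩) | he
      · exact Or.inl he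
      · by_cases hexy : e = s(x, y)
        · exact Or.inl (hexy ▸ (G.mk'_mem_incidenceSet_left_iff.mpr hxy))
        · exact Or.inr (Or.inl ⟨he, by tauto⟩)
      · exact Or.inr (Or.inr he)
    have hxyne : s(x, y) ≠ s(y, z) := by
      intro h
      rcases Sym2.eq_iff.mp h with ⟨h1, h2⟩ | ⟨h1, h2⟩
      · exact hxy.ne h1
      · exact hxz h1
    have hsy : ({s(x, y), s(y, z)} : Finset (Sym2 V)) ⊆ G.incidenceFinset y := by
      intro e he
      rw [SimpleGraph.mem_incidenceFinset]
      rcases Finset.mem_insert.mp he with rfl | he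
      · exact G.mk'_mem_incidenceSet_right_iff.mpr hxy
      · rw [Finset.mem_singleton] at he
        exact he ▸ G.mk'_mem_incidenceSet_left_iff.mpr hyz
    have hsz : ({s(y, z)} : Finset (Sym2 V)) ⊆ G.incidenceFinset z := by
      intro e he
      rw [Finset.mem_singleton] at he
      rw [SimpleGraph.mem_incidenceFinset]
      exact he ▸ G.mk'_mem_incidenceSet_right_iff.mpr hyz
    have c1 : (G.incidenceFinset y \ {s(x, y), s(y, z)}).card = G.degree y - 2 := by
      rw [Finset.card_sdiff_of_subset hsy, G.card_incidenceFinset_eq_degree,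
        Finset.card_insert_of_notMem (by simpa using hxyne), Finset.card_singleton]
    have c2 : (G.incidenceFinset z \ {s(y, z)}).card = G.degree z - 1 := by
      rw [Finset.card_sdiff_of_subset hsz, G.card_incidenceFinset_eq_degree, Finset.card_singleton]
    have hdy : 2 ≤ G.degree y := by
      have hss : ({x, z} : Finset V) ⊆ G.neighborFinset y := by
        intro a ha
        rw [SimpleGraph.mem_neighborFinset]
        rcases Finset.mem_insert.mp ha with rfl | ha
        · exact hxy.symm
        · rw [Finset.mem_singleton] at ha
          exact ha ▸ hyz
      have h2 := Finset.card_le_card hss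
      rw [Finset.card_insert_of_notMem (by simp [hxz]), Finset.card_singleton,
        SimpleGraph.card_neighborFinset_eq_degree] at h2
      exact h2
    have hdz : 1 ≤ G.degree z := (G.degree_pos_iff_exists_adj z).mpr ⟨y, hyz.symm⟩
    have h0 := Finset.card_le_card hsubB
    have h1 : (G.incidenceFinset x ∪ ((G.incidenceFinset y \ {s(x, y), s(y, z)}) ∪
        (G.incidenceFinset z \ {s(y, z)}))).card ≤
        G.degree x + ((G.degree y - 2) + (G.degree z - 1)) := by
      refine (Finset.card_union_le _ _).trans ?_
      rw [G.card_incidenceFinset_eq_degree]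
      refine Nat.add_le_add_left ((Finset.card_union_le _ _).trans ?_) _
      rw [c1, c2]
    have := h0.trans h1
    omega
  -- the deletion increases the Roman domination number
  set G' := G.deleteEdges ↑B with hG'
  have hx_iso : ∀ w, ¬ G'.Adj x w := by
    intro w hw
    rw [hG', deleteEdges_adj] at hw
    refine hw.2 (Finset.mem_coe.mpr ?_)
    refine Finset.mem_union_left _ (Finset.mem_union_left _ ?_)
    rw [SimpleGraph.mem_incidenceFinset]
    exact G.mk'_mem_incidenceSet_left_iff.mpr hw.1
  have hy_only : ∀ w, G'.Adj y w → w = z := by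
    intro w hw
    by_contra hne
    rw [hG', deleteEdges_adj] at hw
    apply hw.2
    apply Finset.mem_coe.mpr
    refine Finset.mem_union_left _ (Finset.mem_union_right _ ?_)
    rw [Finset.mem_sdiff, SimpleGraph.mem_incidenceFinset, Finset.mem_singleton]
    refine ⟨G.mk'_mem_incidenceSet_left_iff.mpr hw.1, ?_⟩
    intro h
    rcases Sym2.eq_iff.mp h with ⟨_, h2⟩ | ⟨h1, _⟩
    · exact hne h2
    · exact hyz' h1
  have hz_only : ∀ w, G'.Adj z w → w = y := by
    intro w hw
    by_contra hne
    rw [hG', deleteEdges_adj] at hw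
    apply hw.2
    apply Finset.mem_coe.mpr
    refine Finset.mem_union_right _ ?_
    rw [Finset.mem_sdiff, SimpleGraph.mem_incidenceFinset, Finset.mem_singleton]
    refine ⟨G.mk'_mem_incidenceSet_left_iff.mpr hw.1, ?_⟩
    intro h
    rcases Sym2.eq_iff.mp h with ⟨h1, _⟩ | ⟨_, h2⟩
    · exact hyz' h1.symm
    · exact hne h2
  have hsplit : ∀ h : V → ℕ, ∑ v, h v = ∑ v ∈ univ \ ({x, y, z} : Finset V), h v
      + (h x + h y + h z) := by
    intro h
    rw [← Finset.sum_sdiff (Finset.subset_univ ({x, y, z} : Finset V)),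
      Finset.sum_insert (by simp [hxy', hxz]), Finset.sum_insert (by simp [hyz']),
      Finset.sum_singleton]
    omega
  have hmono : romanDomNum G < romanDomNum G' := by
    have hne : {w | ∃ f : V → ℕ, IsRDF G' f ∧ ∑ v, f v = w}.Nonempty :=
      ⟨_, fun _ => 2, ⟨fun _ => le_refl 2, fun v h => by simp at h⟩, rfl⟩
    have hmem : romanDomNum G' ∈ {w | ∃ f : V → ℕ, IsRDF G' f ∧ ∑ v, f v = w} :=
      Nat.sInf_mem hne
    obtain ⟨f, hf, hfw⟩ := hmem
    obtain ⟨g, hgx, hgy, hgz, hgoff⟩ : ∃ g : V → ℕ, g x = 0 ∧ g y = 2 ∧ g z = 0 ∧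
        ∀ v, v ≠ x → v ≠ y → v ≠ z → g v = f v := by
      refine ⟨fun v => if v = x then 0 else if v = y then 2 else if v = z then 0 else f v,
        by simp, by simp [Ne.symm hxy'], by simp [Ne.symm hxz, Ne.symm hyz'], ?_⟩
      intro v h1 h2 h3
      simp [h1, h2, h3]
    have hgRDF : IsRDF G g := by
      constructor
      · intro v
        by_cases h1 : v = x; · rw [h1, hgx]; omega
        by_cases h2 : v = y; · rw [h2, hgy]
        by_cases h3 : v = z; · rw [h3, hgz]; omega
        rw [hgoff v h1 h2 h3]; exact hf.1 v
      · intro v hv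
        by_cases h1 : v = x
        · exact ⟨y, h1 ▸ hxy, hgy⟩
        by_cases h2 : v = y
        · rw [h2, hgy] at hv; omega
        by_cases h3 : v = z
        · exact ⟨y, h3 ▸ hyz.symm, hgy⟩
        rw [hgoff v h1 h2 h3] at hv
        obtain ⟨u, hu, hu2⟩ := hf.2 v hv
        have hux : u ≠ x := fun h => hx_iso v (h ▸ hu).symm
        have huy : u ≠ y := fun h => h3 (hy_only v (h ▸ hu).symm)
        have huz : u ≠ z := fun h => h2 (hz_only v (h ▸ hu).symm)
        refine ⟨u, ?_, by rw [hgoff u hux huy huz]; exact hu2⟩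
        rw [hG', deleteEdges_adj] at hu
        exact hu.1
    have h3 : 3 ≤ f x + f y + f z := by
      have hfx : 1 ≤ f x := by
        rcases Nat.eq_zero_or_pos (f x) with h | h
        · obtain ⟨u, hu, _⟩ := hf.2 x h
          exact absurd hu (hx_iso u)
        · exact h
      by_cases hfy : f y = 0
      · obtain ⟨u, hu, hu2⟩ := hf.2 y hfy
        rw [hy_only u hu] at hu2
        omega
      by_cases hfz : f z = 0
      · obtain ⟨u, hu, hu2⟩ := hf.2 z hfz
        rw [hz_only u hu] at hu2
        omega
      omega
    have htail : ∑ v ∈ univ \ ({x, y, z} : Finset V), g v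
        = ∑ v ∈ univ \ ({x, y, z} : Finset V), f v := by
      apply Finset.sum_congr rfl
      intro v hv
      simp only [Finset.mem_sdiff, Finset.mem_insert, Finset.mem_singleton] at hv
      push_neg at hv
      exact hgoff v hv.2.1 hv.2.2.1 hv.2.2.2
    have hlt : ∑ v, g v < ∑ v, f v := by
      rw [hsplit g, hsplit f, htail, hgx, hgy, hgz]
      omega
    have hle : romanDomNum G ≤ ∑ v, g v := Nat.sInf_le ⟨g, hgRDF, rfl⟩
    omega
  calc romanBondage G ≤ (B.card : ℕ∞) := sInf_le ⟨B, hBsub, rfl, hmono⟩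
    _ ≤ ((G.degree x + G.degree y + G.degree z - 3 : ℕ) : ℕ∞) := Nat.cast_le.mpr hcard

theorem roman_bondage_diam_ge_two {V : Type*} [Fintype V]
    (G : SimpleGraph V) [DecidableRel G.Adj]
    (hconn : G.Connected) (hdiam : 2 ≤ G.diam) :
    romanBondage G ≤ ((2 * G.maxDegree + G.minDegree - 3 : ℕ) : ℕ∞) := by
  classical
  have hnt : Nontrivial V := G.nontrivial_of_diam_ne_zero (by omega)
  have hcard3 : 3 ≤ Fintype.card V := by
    obtain ⟨a, b, hab⟩ := G.exists_dist_eq_diam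
    have hd2 : 2 ≤ G.dist a b := by rw [hab]; exact hdiam
    have hanb : a ≠ b := by
      intro h
      rw [h, SimpleGraph.dist_self] at hd2
      omega
    obtain ⟨p, hp⟩ := (hconn a b).exists_walk_length_eq_dist
    cases p with
    | nil => rw [SimpleGraph.Walk.length_nil] at hp; omega
    | @cons _ m _ h q =>
      rw [SimpleGraph.Walk.length_cons] at hp
      have hmb : m ≠ b := by
        intro hmb
        subst hmb
        have h1 : G.dist a m ≤ (SimpleGraph.Walk.cons h SimpleGraph.Walk.nil).length :=
          SimpleGraph.dist_le _
        rw [SimpleGraph.Walk.length_cons, SimpleGraph.Walk.length_nil] at h1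
        omega
      have hcard : ({a, m, b} : Finset V).card = 3 := by
        rw [Finset.card_insert_of_notMem (by simp [h.ne, hanb]),
          Finset.card_insert_of_notMem (by simp [hmb]), Finset.card_singleton]
      calc 3 = ({a, m, b} : Finset V).card := hcard.symm
        _ ≤ (Finset.univ : Finset V).card := Finset.card_le_univ _
        _ = Fintype.card V := Finset.card_univ
  obtain ⟨v, hv⟩ := G.exists_minimal_degree_vertex
  have hvadj : ∃ u, G.Adj v u := by
    obtain ⟨w, hw⟩ := exists_ne v
    obtain ⟨p⟩ := hconn.preconnected v w
    cases p with
    | nil => exact absurd rfl hw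
    | cons h q => exact ⟨_, h⟩
  have hδpos : 0 < G.degree v := (G.degree_pos_iff_exists_adj v).mpr hvadj
  by_cases hd : 2 ≤ G.degree v
  · obtain ⟨a, ha, b, hb, hne⟩ := Finset.one_lt_card.mp
      (show 1 < (G.neighborFinset v).card by
        rw [SimpleGraph.card_neighborFinset_eq_degree]; omega)
    rw [SimpleGraph.mem_neighborFinset] at ha hb
    refine le_trans (key_path G ha.symm hb hne) (Nat.cast_le.mpr (Nat.sub_le_sub_right ?_ 3))
    have h1 := G.degree_le_maxDegree a
    have h2 := G.degree_le_maxDegree b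
    omega
  · have hdv : G.degree v = 1 := by omega
    obtain ⟨u, hu⟩ := hvadj
    have hdu : 2 ≤ G.degree u := by
      by_contra hcon
      have hdu1 : G.degree u = 1 := by
        have : 0 < G.degree u := (G.degree_pos_iff_exists_adj u).mpr ⟨v, hu.symm⟩
        omega
      have hnv : G.neighborFinset v = {u} := by
        have hone : (G.neighborFinset v).card = 1 := by
          rw [SimpleGraph.card_neighborFinset_eq_degree]; exact hdv
        obtain ⟨c, hc⟩ := Finset.card_eq_one.mp hone
        have hmem : u ∈ G.neighborFinset v := by
          rw [SimpleGraph.mem_neighborFinset]; exact hu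
        rw [hc, Finset.mem_singleton] at hmem
        rw [hc, hmem]
      have hnu : G.neighborFinset u = {v} := by
        have hone : (G.neighborFinset u).card = 1 := by
          rw [SimpleGraph.card_neighborFinset_eq_degree]; exact hdu1
        obtain ⟨c, hc⟩ := Finset.card_eq_one.mp hone
        have hmem : v ∈ G.neighborFinset u := by
          rw [SimpleGraph.mem_neighborFinset]; exact hu.symm
        rw [hc, Finset.mem_singleton] at hmem
        rw [hc, hmem]
      have claim : ∀ s c : V, G.Walk s c → (s = v ∨ s = u) → (c = v ∨ c = u) := by
        intro s c p
        induction p with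
        | nil => exact fun h => h
        | @cons s' d c' hadj q ih =>
          intro hs
          apply ih
          rcases hs with rfl | rfl
          · have hmem : d ∈ G.neighborFinset s' := by
              rw [SimpleGraph.mem_neighborFinset]; exact hadj
            rw [hnv, Finset.mem_singleton] at hmem
            exact Or.inr hmem
          · have hmem : d ∈ G.neighborFinset s' := by
              rw [SimpleGraph.mem_neighborFinset]; exact hadj
            rw [hnu, Finset.mem_singleton] at hmem
            exact Or.inl hmem
      obtain ⟨w, hwv, hwu⟩ : ∃ w : V, w ≠ v ∧ w ≠ u := by
        by_contra hcc
        push_neg at hcc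
        have hsub : (Finset.univ : Finset V) ⊆ {v, u} := by
          intro w _
          rcases eq_or_ne w v with rfl | h
          · simp
          · simp [hcc w h]
        have h1 := Finset.card_le_card hsub
        have h2 : ({v, u} : Finset V).card ≤ 2 :=
          (Finset.card_insert_le _ _).trans (by simp)
        rw [Finset.card_univ] at h1
        omega
      obtain ⟨p⟩ := hconn.preconnected v w
      rcases claim v w p (Or.inl rfl) with h | h
      · exact hwv h
      · exact hwu h
    obtain ⟨w, hwmem, hwv⟩ := Finset.exists_mem_ne
      (show 1 < (G.neighborFinset u).card by
        rw [SimpleGraph.card_neighborFinset_eq_degree]; omega) v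
    rw [SimpleGraph.mem_neighborFinset] at hwmem
    refine le_trans (key_path G hu hwmem (fun h => hwv h.symm))
      (Nat.cast_le.mpr (Nat.sub_le_sub_right ?_ 3))
    have h1 := G.degree_le_maxDegree u
    have h2 := G.degree_le_maxDegree w
    omega
end

section
/- For any tree T of order at least 3, the Roman bondage number satisfies b_R(T) ≤ Δ(T). -/
open SimpleGraph Finset

/-!
Call `v` critical if isolating it, i.e. deleting its `deg v` edges, raises `γ_R`; a critical
vertex gives `b_R(T) ≤ deg v ≤ Δ(T)`. Suppose no vertex of `T` is critical, and let `M(v, u)` be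
the Roman domination number of the branch of `T` at `v` containing `u`. The two sides of an edge
`uv` partition `T`, so `γ_R(T) ≤ M(u, v) + M(v, u)`. The branches at `v` are disjoint, and an
optimal Roman dominating function of `T` with `v` isolated spends at least `1` on `v`, so
`1 + ∑_{u ∼ v} M(v, u) ≤ γ_R(T)`. Summing the first bound over the `n - 1` edges and the second
over the `n` vertices gives `n ≤ γ_R(T)`, whereas a vertex of degree `2` already yields a Roman
dominating function of weight `n - 1`.
-/

/-- Roman domination of the induced subgraph `G[S]`, with the function read off on `S`. -/
def IsRDFOn {V : Type*} (G : SimpleGraph V) (S : Finset V) (f : V → ℕ) : Prop :=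
  (∀ v ∈ S, f v ≤ 2) ∧ ∀ v ∈ S, f v = 0 → ∃ u ∈ S, G.Adj v u ∧ f u = 2

noncomputable def romanDomNumOn {V : Type*} (G : SimpleGraph V) (S : Finset V) : ℕ :=
  sInf {w | ∃ f : V → ℕ, IsRDFOn G S f ∧ ∑ v ∈ S, f v = w}

section RomanDomination

variable {V : Type*} (G : SimpleGraph V)

theorem exists_isRDF_sum_eq_romanDomNum [Fintype V] :
    ∃ f : V → ℕ, IsRDF G f ∧ ∑ v, f v = romanDomNum G :=
  Nat.sInf_mem (s := {w | ∃ f : V → ℕ, IsRDF G f ∧ ∑ v, f v = w})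
    ⟨_, fun _ => 1, ⟨fun _ => by norm_num, fun _ h => absurd h one_ne_zero⟩, rfl⟩

theorem exists_isRDFOn_sum_eq_romanDomNumOn (S : Finset V) :
    ∃ f : V → ℕ, IsRDFOn G S f ∧ ∑ v ∈ S, f v = romanDomNumOn G S :=
  Nat.sInf_mem (s := {w | ∃ f : V → ℕ, IsRDFOn G S f ∧ ∑ v ∈ S, f v = w})
    ⟨_, fun _ => 1, ⟨fun _ _ => by norm_num, fun _ _ h => absurd h one_ne_zero⟩, rfl⟩

theorem romanDomNum_le_romanDomNumOn_add_compl [Fintype V] [DecidableEq V] (S : Finset V) :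
    romanDomNum G ≤ romanDomNumOn G S + romanDomNumOn G Sᶜ := by
  obtain ⟨f, ⟨hf2, hf0⟩, hfS⟩ := exists_isRDFOn_sum_eq_romanDomNumOn G S
  obtain ⟨g, ⟨hg2, hg0⟩, hgS⟩ := exists_isRDFOn_sum_eq_romanDomNumOn G Sᶜ
  refine Nat.sInf_le ⟨fun v => if v ∈ S then f v else g v, ⟨fun v => ?_, fun v hv => ?_⟩, ?_⟩
  · dsimp only
    split_ifs with h
    exacts [hf2 v h, hg2 v (mem_compl.2 h)]
  · dsimp only at hv
    split_ifs at hv with h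
    · obtain ⟨u, hu, hvu, hu2⟩ := hf0 v h hv
      exact ⟨u, hvu, by simp [hu, hu2]⟩
    · obtain ⟨u, hu, hvu, hu2⟩ := hg0 v (mem_compl.2 h) hv
      exact ⟨u, hvu, by simp [mem_compl.1 hu, hu2]⟩
  · rw [← hfS, ← hgS, ← sum_add_sum_compl S, sum_congr rfl fun v hv => if_pos hv,
      sum_congr rfl fun v hv => if_neg (mem_compl.1 hv)]

theorem romanDomNumOn_le_sum_of_isRDF {G' : SimpleGraph V} (hle : G' ≤ G) {S : Finset V}
    (hS : ∀ x ∈ S, ∀ y, G'.Adj x y → y ∈ S) {f : V → ℕ} (hf : IsRDF G' f) :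
    romanDomNumOn G S ≤ ∑ x ∈ S, f x := by
  refine Nat.sInf_le ⟨f, ⟨fun x _ => hf.1 x, fun x hx h0 => ?_⟩, rfl⟩
  obtain ⟨y, hxy, hy⟩ := hf.2 x h0
  exact ⟨y, hS x hx y hxy, hle hxy, hy⟩

theorem romanDomNum_add_degree_le [Fintype V] [DecidableRel G.Adj] (w : V) :
    romanDomNum G + G.degree w ≤ Fintype.card V + 1 := by
  classical
  let f : V → ℕ := fun x => if x = w then 2 else if G.Adj w x then 0 else 1
  have hf : IsRDF G f := by
    refine ⟨fun x => by dsimp only [f]; split_ifs <;> omega, fun x hx => ⟨w, ?_, by simp [f]⟩⟩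
    dsimp only [f] at hx
    split_ifs at hx with h1 h2
    exact h2.symm
  have hweight : ∀ x, f x + (if G.Adj w x then 1 else 0) = 1 + if x = w then 1 else 0 := by
    intro x
    by_cases hx : x = w
    · simp [f, hx]
    · by_cases hwx : G.Adj w x <;> simp [f, hx, hwx]
  have hsum : ∑ x, f x + G.degree w = Fintype.card V + 1 := by
    rw [← card_neighborFinset_eq_degree, neighborFinset_eq_filter, card_filter,
      ← sum_add_distrib, sum_congr rfl fun x _ => hweight x, sum_add_distrib]
    simp
  have hγ : romanDomNum G ≤ ∑ x, f x := Nat.sInf_le ⟨f, hf, rfl⟩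
  omega

theorem romanBondage_le_degree [Fintype V] [DecidableRel G.Adj] {v : V}
    (hv : romanDomNum G < romanDomNum (G.deleteIncidenceSet v)) :
    romanBondage G ≤ G.degree v := by
  classical
  refine sInf_le ⟨G.incidenceFinset v, ?_, by simp, ?_⟩
  · simpa using G.incidenceSet_subset v
  · simpa [deleteIncidenceSet] using hv

end RomanDomination

namespace SimpleGraph

variable {V : Type*} {G : SimpleGraph V} {u u' v w x y : V}

theorem reachable_deleteIncidenceSet_iff_eq :
    (G.deleteIncidenceSet v).Reachable v u ↔ u = v := by
  refine ⟨fun ⟨p⟩ => ?_, by rintro rfl; exact Reachable.refl _⟩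
  cases p with
  | nil => rfl
  | cons h _ => exact absurd rfl (deleteIncidenceSet_adj.1 h).2.1

theorem Reachable.deleteIncidenceSet_adj_or_eq (huv : u ≠ v)
    (hx : (G.deleteIncidenceSet v).Reachable u x) (hxy : G.Adj x y) :
    (G.deleteIncidenceSet v).Reachable u y ∨ y = v := by
  by_cases hy : y = v
  · exact Or.inr hy
  have hxv : x ≠ v := by
    rintro rfl
    exact huv (reachable_deleteIncidenceSet_iff_eq.1 hx.symm)
  exact Or.inl (hx.trans (deleteIncidenceSet_adj.2 ⟨hxy, hxv, hy⟩).reachable)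

/-- Follow a walk from `u` to `w`: the invariant can only switch sides through `u` or `v`. -/
theorem Connected.reachable_deleteIncidenceSet_or (hG : G.Connected) (huv : u ≠ v) (w : V) :
    (G.deleteIncidenceSet v).Reachable u w ∨ (G.deleteIncidenceSet u).Reachable v w := by
  let P : V → Prop := fun z =>
    (G.deleteIncidenceSet v).Reachable u z ∨ (G.deleteIncidenceSet u).Reachable v z
  have step : ∀ x y, G.Adj x y → P x → P y := by
    rintro x y hxy (hx | hx)
    · exact (hx.deleteIncidenceSet_adj_or_eq huv hxy).imp_right
        (by rintro rfl; exact Reachable.refl _)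
    · exact ((hx.deleteIncidenceSet_adj_or_eq huv.symm hxy).imp_right
        (by rintro rfl; exact Reachable.refl _)).symm
  suffices ∀ x y, G.Walk x y → P x → P y from this u w (hG.preconnected u w).some
      (Or.inl (Reachable.refl u))
  intro x y p
  induction p with
  | nil => exact id
  | cons h _ ih => exact ih ∘ step _ _ h

theorem deleteIncidenceSet_le_deleteEdges {e : Sym2 V} (he : v ∈ e) :
    G.deleteIncidenceSet v ≤ G.deleteEdges {e} := fun a b h => by
  obtain ⟨hab, hav, hbv⟩ := deleteIncidenceSet_adj.1 h
  refine deleteEdges_adj.2 ⟨hab, fun he' => ?_⟩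
  rw [← Set.mem_singleton_iff.1 he', Sym2.mem_iff] at he
  exact he.elim (fun h => hav h.symm) fun h => hbv h.symm

theorem IsAcyclic.not_reachable_deleteEdges (hG : G.IsAcyclic) (huv : G.Adj u v) :
    ¬ (G.deleteEdges {s(u, v)}).Reachable u v :=
  isBridge_iff.1 (isAcyclic_iff_forall_adj_isBridge.1 hG huv)

theorem IsAcyclic.not_reachable_deleteIncidenceSet_of_adj (hG : G.IsAcyclic) (hu : G.Adj u v)
    (hu' : G.Adj u' v) (hne : u ≠ u') : ¬ (G.deleteIncidenceSet v).Reachable u u' := by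
  intro h
  refine hG.not_reachable_deleteEdges hu <|
    (h.mono (deleteIncidenceSet_le_deleteEdges (Sym2.mem_mk_right u v))).trans
      (deleteEdges_adj.2 ⟨hu', fun he => hne ?_⟩).reachable
  exact (Sym2.congr_left.1 (Set.mem_singleton_iff.1 he)).symm

theorem IsAcyclic.not_reachable_deleteIncidenceSet_and (hG : G.IsAcyclic) (huv : G.Adj u v)
    (w : V) :
    ¬ ((G.deleteIncidenceSet v).Reachable u w ∧ (G.deleteIncidenceSet u).Reachable v w) :=
  fun ⟨hu, hv⟩ => hG.not_reachable_deleteEdges huv <|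
    (hu.mono (deleteIncidenceSet_le_deleteEdges (Sym2.mem_mk_right u v))).trans
      (hv.mono (deleteIncidenceSet_le_deleteEdges (Sym2.mem_mk_left u v))).symm

open Classical in
noncomputable def branch [Fintype V] (G : SimpleGraph V) (v u : V) : Finset V :=
  {w | (G.deleteIncidenceSet v).Reachable u w}

variable [Fintype V]

theorem mem_branch : w ∈ G.branch v u ↔ (G.deleteIncidenceSet v).Reachable u w := by
  simp [branch]

theorem IsTree.branch_eq_compl [DecidableEq V] (hG : G.IsTree) (huv : G.Adj u v) :
    G.branch u v = (G.branch v u)ᶜ := by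
  ext w
  rw [mem_compl, mem_branch, mem_branch]
  exact ⟨fun hv hu => hG.isAcyclic.not_reachable_deleteIncidenceSet_and huv w ⟨hu, hv⟩,
    (hG.connected.reachable_deleteIncidenceSet_or huv.ne w).resolve_left⟩

theorem IsAcyclic.one_add_sum_romanDomNumOn_branch_le [DecidableRel G.Adj] (hG : G.IsAcyclic)
    (v : V) :
    1 + ∑ u ∈ G.neighborFinset v, romanDomNumOn G (G.branch v u) ≤
      romanDomNum (G.deleteIncidenceSet v) := by
  classical
  obtain ⟨f, hf, hfsum⟩ := exists_isRDF_sum_eq_romanDomNum (G.deleteIncidenceSet v)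
  have hfv : 1 ≤ f v := Nat.one_le_iff_ne_zero.2 fun h0 =>
    let ⟨_, hvu, _⟩ := hf.2 v h0; (deleteIncidenceSet_adj.1 hvu).2.1 rfl
  have hdisj : (G.neighborFinset v : Set V).PairwiseDisjoint (G.branch v) := by
    intro u hu u' hu' hne
    change Disjoint (G.branch v u) (G.branch v u')
    refine Finset.disjoint_left.2 fun w hw hw' => ?_
    rw [mem_branch] at hw hw'
    exact hG.not_reachable_deleteIncidenceSet_of_adj ((mem_neighborFinset G v u).1 hu).symm
      ((mem_neighborFinset G v u').1 hu').symm hne (hw.trans hw'.symm)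
  have hv : v ∉ (G.neighborFinset v).biUnion (G.branch v) := by
    simp only [mem_biUnion, mem_branch, not_exists, not_and]
    exact fun u hu h => ((mem_neighborFinset G v u).1 hu).ne'
      (reachable_deleteIncidenceSet_iff_eq.1 h.symm)
  have hbranch : ∀ u, romanDomNumOn G (G.branch v u) ≤ ∑ x ∈ G.branch v u, f x := fun u =>
    romanDomNumOn_le_sum_of_isRDF G (G.deleteIncidenceSet_le v)
      (fun x hx y hxy => mem_branch.2 ((mem_branch.1 hx).trans hxy.reachable)) hf
  calc 1 + ∑ u ∈ G.neighborFinset v, romanDomNumOn G (G.branch v u)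
      ≤ f v + ∑ u ∈ G.neighborFinset v, ∑ x ∈ G.branch v u, f x :=
        Nat.add_le_add hfv (sum_le_sum fun u _ => hbranch u)
    _ = ∑ x ∈ insert v ((G.neighborFinset v).biUnion (G.branch v)), f x := by
        rw [sum_insert hv, sum_biUnion hdisj]
    _ ≤ ∑ x, f x := sum_le_sum_of_subset (subset_univ _)
    _ = romanDomNum (G.deleteIncidenceSet v) := hfsum

theorem sum_sum_neighborFinset_comm {M : Type*} [AddCommMonoid M] [DecidableRel G.Adj]
    (g : V → V → M) :
    ∑ v, ∑ u ∈ G.neighborFinset v, g u v = ∑ v, ∑ u ∈ G.neighborFinset v, g v u := by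
  simp_rw [neighborFinset_eq_filter, sum_filter]
  rw [sum_comm]
  simp_rw [G.adj_comm]

theorem IsTree.card_le_romanDomNum [DecidableRel G.Adj] (hG : G.IsTree)
    (h : ∀ v, romanDomNum (G.deleteIncidenceSet v) ≤ romanDomNum G) :
    Fintype.card V ≤ romanDomNum G := by
  classical
  set γ := romanDomNum G
  set M : V → V → ℕ := fun v u => romanDomNumOn G (G.branch v u)
  set D := ∑ v, ∑ u ∈ G.neighborFinset v, M v u
  have hedge : ∀ v, ∀ u ∈ G.neighborFinset v, γ ≤ M v u + M u v := fun v u hu => by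
    simpa [M, ← hG.branch_eq_compl ((mem_neighborFinset G v u).1 hu).symm]
      using romanDomNum_le_romanDomNumOn_add_compl G (G.branch v u)
  have hedges : 2 * #G.edgeFinset * γ ≤ 2 * D := calc
    2 * #G.edgeFinset * γ = ∑ v, ∑ u ∈ G.neighborFinset v, γ := by
      simp only [sum_const, card_neighborFinset_eq_degree, smul_eq_mul, ← sum_mul,
        sum_degrees_eq_twice_card_edges]
    _ ≤ ∑ v, ∑ u ∈ G.neighborFinset v, (M v u + M u v) :=
      sum_le_sum fun v _ => sum_le_sum (hedge v)
    _ = 2 * D := by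
      simp_rw [sum_add_distrib]
      rw [sum_sum_neighborFinset_comm M, two_mul]
  have hvertices : Fintype.card V + D ≤ Fintype.card V * γ := calc
    Fintype.card V + D = ∑ v, (1 + ∑ u ∈ G.neighborFinset v, M v u) := by
      rw [sum_add_distrib, sum_const, card_univ, smul_eq_mul, mul_one]
    _ ≤ ∑ _v : V, γ := sum_le_sum fun v _ =>
      (hG.isAcyclic.one_add_sum_romanDomNumOn_branch_le v).trans (h v)
    _ = Fintype.card V * γ := by rw [sum_const, card_univ, smul_eq_mul]
  have hmul : Fintype.card V * γ = #G.edgeFinset * γ + γ := by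
    rw [← hG.card_edgeFinset]; ring
  nlinarith

theorem IsTree.exists_two_le_degree [DecidableRel G.Adj] (hG : G.IsTree)
    (hn : 3 ≤ Fintype.card V) : ∃ v, 2 ≤ G.degree v := by
  have hsum := G.sum_degrees_eq_twice_card_edges
  have hcard := hG.card_edgeFinset
  have hlt : ∑ _v : V, 1 < ∑ v, G.degree v := by
    simp only [sum_const, card_univ, smul_eq_mul, mul_one]
    omega
  obtain ⟨v, -, hv⟩ := exists_lt_of_sum_lt hlt
  exact ⟨v, hv⟩

theorem IsTree.exists_romanDomNum_lt_deleteIncidenceSet [DecidableRel G.Adj] (hG : G.IsTree)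
    (hn : 3 ≤ Fintype.card V) : ∃ v, romanDomNum G < romanDomNum (G.deleteIncidenceSet v) := by
  by_contra! h
  obtain ⟨w, hw⟩ := hG.exists_two_le_degree hn
  have := hG.card_le_romanDomNum h
  have := romanDomNum_add_degree_le G w
  omega

end SimpleGraph

theorem roman_bondage_tree {V : Type*} [Fintype V]
    (T : SimpleGraph V) [DecidableRel T.Adj]
    (hconn : T.Connected) (hacyclic : T.IsAcyclic) (hn : 3 ≤ Fintype.card V) :
    romanBondage T ≤ (T.maxDegree : ℕ∞) := by
  obtain ⟨v, hv⟩ := IsTree.exists_romanDomNum_lt_deleteIncidenceSet ⟨hconn, hacyclic⟩ hn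
  exact (romanBondage_le_degree T hv).trans (by exact_mod_cast T.degree_le_maxDegree v)
end

section
/- If G is a Roman graph, i.e., γ_R(G) = 2γ(G), then b_R(G) ≥ b(G). -/
open SimpleGraph Finset

lemma romanDomNum_le_two_mul_domNum {V : Type*} [Fintype V] (G : SimpleGraph V) :
    romanDomNum G ≤ 2 * domNum G := by
  classical
  have hne : {k | ∃ S : Finset V, IsDomSet G ↑S ∧ S.card = k}.Nonempty := by
    exact ⟨(Finset.univ : Finset V).card, Finset.univ, fun v => Or.inl (by simp), rfl⟩
  obtain ⟨S, hS, hcard⟩ := Nat.sInf_mem hne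
  apply Nat.sInf_le
  refine ⟨fun v => if v ∈ S then 2 else 0, ⟨fun v => by simp only []; split <;> simp, ?_⟩, ?_⟩
  · intro v hv
    have hvS : v ∉ S := by intro h; simp [h] at hv
    rcases hS v with h | ⟨u, hu, hadj⟩
    · exact absurd h (by simpa using hvS)
    · exact ⟨u, hadj, by simpa using hu⟩
  · rw [Finset.sum_ite_mem, Finset.univ_inter, Finset.sum_const, hcard]
    simp [domNum, Nat.smul_one_eq_cast, mul_comm]

theorem bondage_le_roman_bondage_of_roman {V : Type*} [Fintype V]
    (G : SimpleGraph V) (hne : G ≠ ⊥)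
    (hroman : romanDomNum G = 2 * domNum G) :
    bondage G ≤ romanBondage G := by
  apply sInf_le_sInf
  rintro k ⟨B, hB, hk, hgt⟩
  refine ⟨B, hB, hk, ?_⟩
  have h1 : 2 * domNum G < romanDomNum (G.deleteEdges ↑B) := hroman ▸ hgt
  have h2 := romanDomNum_le_two_mul_domNum (G.deleteEdges (↑B : Set (Sym2 V)))
  have := lt_of_lt_of_le h1 h2
  omega
end
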